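/- arXiv:1608.06779 — 14 statements merged into one kernel-verified Lean document; each statement's English description precedes it below -/
import Mathlib

section
/- Let a, b, x be elements of a unital *-ring R such that xa = bx and x a* = b* x. If p is a {1,3}-inverse of a and q is a {1,3}-inverse of b, then x a p = b q x. -/
/-- Let `a, b, x` be elements of a unital `*`-ring `R` such that `xa = bx` and
`x a* = b* x`.  If `p` is a `{1,3}`-inverse of `a` and `q` is a `{1,3}`-inverse
of `b`, then `x a p = b q x`. -/
theorem stmt_0 {R : Type*} [Ring R] [StarRing R] (a b x p q : R)
    (hxa : x * a = b * x) (hxas : x * star a = star b * x)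
    (hp1 : a * p * a = a) (hp3 : star (a * p) = a * p)
    (hq1 : b * q * b = b) (hq3 : star (b * q) = b * q) :
    x * a * p = b * q * x := by
  have key : star a * (a * p) = star a := by
    rw [← hp3, ← star_mul, hp1]
  calc x * a * p = b * q * b * x * p := by rw [hxa, hq1]
    _ = star (b * q) * (x * a) * p := by rw [mul_assoc (b * q), hxa, hq3]
    _ = star q * (x * star a) * (a * p) := by
        rw [star_mul, hxas]; simp only [mul_assoc]
    _ = b * q * x := by
        simp only [mul_assoc]; rw [key, hxas, ← mul_assoc, ← star_mul, hq3, mul_assoc]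
end

section
/- Let a, b, x be elements of a unital *-ring R such that xa = bx and x a* = b* x. If y is a core inverse of a and z is a core inverse of b, then x y = z x. -/
/-- `x` is a core inverse of `a`. -/
def IsCoreInverse {R : Type*} [Ring R] [StarRing R] (a x : R) : Prop :=
  a * x * a = a ∧ x * a * x = x ∧ star (a * x) = a * x ∧ x * a ^ 2 = a ∧ a * x ^ 2 = x

/-- Let `a, b, x` be elements of a unital `*`-ring such that `xa = bx` and
`x a* = b* x`. If `y` is a core inverse of `a` and `z` is a core inverse of `b`,
then `x y = z x`. -/
theorem stmt_1 {R : Type*} [Ring R] [StarRing R] (a b x y z : R)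
    (hxa : x * a = b * x) (hxas : x * star a = star b * x)
    (hy : IsCoreInverse a y) (hz : IsCoreInverse b z) :
    x * y = z * x := by
  obtain ⟨hy1, hy2, hy3, hy4, hy5⟩ := hy
  obtain ⟨hz1, hz2, hz3, hz4, hz5⟩ := hz
  have h1 : star a * a * y = star a := by
    calc star a * a * y = star a * (a * y) := by rw [mul_assoc]
      _ = star a * star (a * y) := by rw [hy3]
      _ = star (a * y * a) := (star_mul _ _).symm
      _ = star a := by rw [hy1]
  have h2 : z = z * star z * star b := by
    calc z = z * b * z := hz2.symm
      _ = z * (b * z) := by rw [mul_assoc]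
      _ = z * star (b * z) := by rw [hz3]
      _ = z * (star z * star b) := by rw [star_mul]
      _ = z * star z * star b := by rw [mul_assoc]
  have hxy : x * y = b * x * (y * y) := by
    calc x * y = x * (a * y ^ 2) := by rw [hy5]
      _ = x * a * (y * y) := by rw [sq, ← mul_assoc, ← mul_assoc]
      _ = b * x * (y * y) := by rw [hxa]
  have hB : z * b * (x * y) = x * y := by
    calc z * b * (x * y) = z * b * (b * x * (y * y)) := by rw [← hxy]
      _ = z * b ^ 2 * x * (y * y) := by rw [sq]; noncomm_ring
      _ = b * x * (y * y) := by rw [hz4]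
      _ = x * y := hxy.symm
  calc x * y = z * b * (x * y) := hB.symm
    _ = z * (x * (a * y)) := by rw [← mul_assoc x a y, hxa]; noncomm_ring
    _ = z * star z * star b * (x * (a * y)) := by rw [← h2]
    _ = z * star z * (x * star a) * (a * y) := by rw [hxas]; noncomm_ring
    _ = z * star z * (x * (star a * a * y)) := by noncomm_ring
    _ = z * star z * (x * star a) := by rw [h1]
    _ = z * star z * (star b * x) := by rw [hxas]
    _ = z * star z * star b * x := by noncomm_ring
    _ = z * x := by rw [← h2]
end

section
/- Let a, x be elements of a unital *-ring R such that xa = ax and x a* = a* x. If y is a core inverse of a, then x y = y x. -/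
/-- Let `a, x` be elements of a unital `*`-ring such that `xa = ax` and
`x a* = a* x`. If `y` is a core inverse of `a`, then `x y = y x`. -/
theorem stmt_2 {R : Type*} [Ring R] [StarRing R] (a x y : R)
    (hxa : x * a = a * x) (hxas : x * star a = star a * x)
    (hy : IsCoreInverse a y) :
    x * y = y * x := by
  obtain ⟨h1, h2, h3, h4, h5⟩ := hy
  have h2' : y * (a * y) = y := by rw [← mul_assoc]; exact h2
  have h4' : y * (a * a) = a := by rw [← pow_two]; exact h4
  have h5' : a * (y * y) = y := by rw [← pow_two]; exact h5
  have hsx : a * star x = star x * a := by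
    have h := congrArg star hxas
    simpa using h
  -- p := a * y is a hermitian idempotent with p * a = a; we show p * x = x * p.
  have hxp : x * (a * y) = a * (x * y) := by
    rw [← mul_assoc, hxa, mul_assoc]
  have hA : a * y * (x * (a * y)) = x * (a * y) := by
    calc a * y * (x * (a * y)) = a * y * (a * (x * y)) := by rw [hxp]
      _ = a * y * a * (x * y) := (mul_assoc (a * y) a (x * y)).symm
      _ = a * (x * y) := by rw [h1]
      _ = x * (a * y) := hxp.symm
  have hxsp : star x * (a * y) = a * (star x * y) := by
    rw [← mul_assoc, ← hsx, mul_assoc]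
  have hB : a * y * (star x * (a * y)) = star x * (a * y) := by
    calc a * y * (star x * (a * y)) = a * y * (a * (star x * y)) := by rw [hxsp]
      _ = a * y * a * (star x * y) := (mul_assoc (a * y) a (star x * y)).symm
      _ = a * (star x * y) := by rw [h1]
      _ = star x * (a * y) := hxsp.symm
  have hC : a * y * x * (a * y) = a * y * x := by
    have h := congrArg star hB
    rw [star_mul, star_mul, star_star, h3] at h
    simp only [mul_assoc] at h ⊢
    exact h
  have hpx : a * y * x = x * (a * y) := by
    rw [← hC, mul_assoc (a * y) x (a * y)]; exact hA
  -- g := y * (y * a) is the group inverse of a; e := y * a = a * g = g * a.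
  have hygp : y * (y * a) * (a * y) = y := by
    calc y * (y * a) * (a * y) = y * (y * (a * a)) * y := by simp only [mul_assoc]
      _ = y * a * y := by rw [h4']
      _ = y := h2
  have hag : a * (y * (y * a)) = y * a := by
    calc a * (y * (y * a)) = a * (y * y) * a := by simp only [mul_assoc]
      _ = y * a := by rw [h5']
  have hga : y * (y * a) * a = y * a := by
    calc y * (y * a) * a = y * (y * (a * a)) := by simp only [mul_assoc]
      _ = y * a := by rw [h4']
  have hea : y * a * a = a := by rw [mul_assoc]; exact h4'
  have hae : a * (y * a) = a := by rw [← mul_assoc]; exact h1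
  have heg : y * a * (y * (y * a)) = y * (y * a) := by
    calc y * a * (y * (y * a)) = y * (a * y) * (y * a) := by simp only [mul_assoc]
      _ = y * (y * a) := by rw [h2']
  have hge : y * (y * a) * (y * a) = y * (y * a) := by
    calc y * (y * a) * (y * a) = y * (y * (a * y)) * a := by simp only [mul_assoc]
      _ = y * (y * a) := by rw [h2', mul_assoc]
  -- e commutes with x
  have h6 : y * a * x = y * (y * a) * (x * a) := by
    calc y * a * x = y * (y * a) * a * x := by rw [hga]
      _ = y * (y * a) * (a * x) := mul_assoc _ _ _
      _ = y * (y * a) * (x * a) := by rw [hxa]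
  have h7 : x * (y * a) = a * (x * (y * (y * a))) := by
    calc x * (y * a) = x * (a * (y * (y * a))) := by rw [hag]
      _ = x * a * (y * (y * a)) := (mul_assoc _ _ _).symm
      _ = a * x * (y * (y * a)) := by rw [hxa]
      _ = a * (x * (y * (y * a))) := mul_assoc _ _ _
  have h8 : y * a * x * (y * a) = y * a * x := by
    calc y * a * x * (y * a) = y * (y * a) * (x * a) * (y * a) := by rw [h6]
      _ = y * (y * a) * (x * (a * (y * a))) := by simp only [mul_assoc]
      _ = y * (y * a) * (x * a) := by rw [hae]
      _ = y * a * x := h6.symm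
  have h9 : y * a * (x * (y * a)) = x * (y * a) := by
    calc y * a * (x * (y * a)) = y * a * (a * (x * (y * (y * a)))) := by rw [h7]
      _ = y * a * a * (x * (y * (y * a))) := (mul_assoc _ _ _).symm
      _ = a * (x * (y * (y * a))) := by rw [hea]
      _ = x * (y * a) := h7.symm
  have hex : y * a * x = x * (y * a) := by
    rw [← h8, mul_assoc (y * a) x (y * a)]; exact h9
  -- g commutes with x
  have hgx : y * (y * a) * x = x * (y * (y * a)) := by
    calc y * (y * a) * x = y * (y * a) * (y * a) * x := by rw [hge]
      _ = y * (y * a) * (y * a * x) := mul_assoc _ _ _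
      _ = y * (y * a) * (x * (y * a)) := by rw [hex]
      _ = y * (y * a) * (x * (a * (y * (y * a)))) := by rw [hag]
      _ = y * (y * a) * (x * a) * (y * (y * a)) := by simp only [mul_assoc]
      _ = y * (y * a) * (a * x) * (y * (y * a)) := by rw [hxa]
      _ = y * (y * a) * a * (x * (y * (y * a))) := by simp only [mul_assoc]
      _ = y * a * (x * (y * (y * a))) := by rw [hga]
      _ = x * (y * a) * (y * (y * a)) := by rw [← mul_assoc, hex]
      _ = x * (y * (y * a)) := by rw [mul_assoc, heg]
  -- conclusion: y = g * p, and x commutes with both g and p.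
  calc x * y = x * (y * (y * a) * (a * y)) := by rw [hygp]
    _ = x * (y * (y * a)) * (a * y) := (mul_assoc _ _ _).symm
    _ = y * (y * a) * x * (a * y) := by rw [← hgx]
    _ = y * (y * a) * (x * (a * y)) := mul_assoc _ _ _
    _ = y * (y * a) * (a * y * x) := by rw [← hpx]
    _ = y * (y * a) * (a * y) * x := (mul_assoc _ _ _).symm
    _ = y * x := by rw [hygp]
end

section
/- Let a, b be elements of a unital *-ring R with core inverses y and z respectively, and suppose ab = ba and a b* = b* a. Then ab is core invertible, zy is a core inverse of ab, and zy = yz. -/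
private lemma sw {R : Type*} [Ring R] {x y : R} (h : x * y = y * x) (c : R) :
    x * (y * c) = y * (x * c) := by rw [← mul_assoc, h, mul_assoc]

private lemma cl3 {R : Type*} [Ring R] {x y z w : R} (h : x * y * z = w) (c : R) :
    x * (y * (z * c)) = w * c := by simp only [← mul_assoc]; rw [h]

private lemma group_comm {R : Type*} [Ring R] {a g x : R}
    (fcomm : a * g = g * a) (faga : a * g * a = a) (fgag : g * a * g = g)
    (faag : a * (a * g) = a) (h1 : x * a = a * x) : g * x = x * g := by
  have fagg : a * g * g = g := by rw [fcomm]; exact fgag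
  have EA : a * (g * (x * (a * g))) = x * (a * g) := by
    rw [sw h1 g, cl3 faga (x * g)]
  have EB : a * (g * (x * (a * g))) = a * (g * x) := by
    rw [sw fcomm (x * (a * g)), sw h1.symm (a * g), faag, h1, sw fcomm x]
  have E0 : x * (a * g) = a * (g * x) := EA.symm.trans EB
  have F1 : g * (x * a) = x * (a * g) := by
    rw [h1, ← mul_assoc, ← fcomm, mul_assoc]; exact E0.symm
  calc g * x = g * (a * (g * x)) := (cl3 fgag x).symm
    _ = g * (x * (a * g)) := by rw [← E0]
    _ = g * (x * a) * g := by simp only [mul_assoc]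
    _ = x * (a * g) * g := by rw [F1]
    _ = x * g := by rw [mul_assoc, fagg]

private lemma proj_comm {R : Type*} [Ring R] [StarRing R] {a y x : R}
    (e1 : a * y * a = a) (e3 : star (a * y) = a * y)
    (h1 : x * a = a * x) (h2 : star x * a = a * star x) :
    (a * y) * x = x * (a * y) := by
  have hxp : x * (a * y) = a * (x * y) := by rw [← mul_assoc, h1, mul_assoc]
  have s1 : x * (a * y) = (a * y) * (x * (a * y)) := by
    rw [hxp, ← mul_assoc (a * y) a (x * y), e1]
  have hxsp : star x * (a * y) = a * (star x * y) := by rw [← mul_assoc, h2, mul_assoc]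
  have s2 : star x * (a * y) = (a * y) * (star x * (a * y)) := by
    rw [hxsp, ← mul_assoc (a * y) a (star x * y), e1]
  have s3 : (a * y) * x = ((a * y) * x) * (a * y) := by
    calc (a * y) * x = star (a * y) * star (star x) := by rw [e3, star_star]
      _ = star (star x * (a * y)) := (star_mul _ _).symm
      _ = star ((a * y) * (star x * (a * y))) := by rw [← s2]
      _ = star (star x * (a * y)) * star (a * y) := star_mul _ _
      _ = (star (a * y) * star (star x)) * star (a * y) := by rw [star_mul (star x) (a * y)]
      _ = ((a * y) * x) * (a * y) := by rw [e3, star_star]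
  have h : x * (a * y) = (a * y) * x := by rw [s1, ← mul_assoc, ← s3]
  exact h.symm

private lemma comm_y {R : Type*} [Ring R] [StarRing R] {a y x : R}
    (hy : IsCoreInverse a y) (h1 : x * a = a * x) (h2 : star x * a = a * star x) :
    x * y = y * x := by
  obtain ⟨e1, e2, e3, e4, e5⟩ := hy
  have e4' : y * a * a = a := by rw [mul_assoc, ← pow_two]; exact e4
  have e5' : a * y * y = y := by rw [mul_assoc, ← pow_two]; exact e5
  have fag : a * (y * y * a) = y * a := by rw [← mul_assoc, ← mul_assoc, e5']
  have fga : y * y * a * a = y * a := by rw [mul_assoc y y a, mul_assoc y (y * a) a, e4']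
  have fcomm : a * (y * y * a) = (y * y * a) * a := fag.trans fga.symm
  have faga : a * (y * y * a) * a = a := by rw [fag]; exact e4'
  have fgag : (y * y * a) * a * (y * y * a) = y * y * a := by
    rw [fga, mul_assoc y a (y * y * a), fag, ← mul_assoc]
  have faag : a * (a * (y * y * a)) = a := by rw [fag, ← mul_assoc]; exact e1
  have hgx : (y * y * a) * x = x * (y * y * a) := group_comm fcomm faga fgag faag h1
  have hpx : (a * y) * x = x * (a * y) := proj_comm e1 e3 h1 h2
  have hgp : (y * y * a) * (a * y) = y := by
    simp only [mul_assoc]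
    rw [cl3 e4' y, ← mul_assoc]; exact e2
  calc x * y = x * ((y * y * a) * (a * y)) := by rw [hgp]
    _ = x * (y * y * a) * (a * y) := (mul_assoc x (y * y * a) (a * y)).symm
    _ = (y * y * a) * x * (a * y) := by rw [hgx]
    _ = (y * y * a) * (x * (a * y)) := mul_assoc _ _ _
    _ = (y * y * a) * ((a * y) * x) := by rw [hpx]
    _ = (y * y * a) * (a * y) * x := (mul_assoc _ _ _).symm
    _ = y * x := by rw [hgp]

/-- Let `a, b` be elements of a unital `*`-ring with core inverses `y` and `z`
respectively, and suppose `ab = ba` and `a b* = b* a`. Then `ab` is core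
invertible, `zy` is a core inverse of `ab`, and `zy = yz`. -/
theorem stmt_3 {R : Type*} [Ring R] [StarRing R] (a b y z : R)
    (hy : IsCoreInverse a y) (hz : IsCoreInverse b z)
    (hab : a * b = b * a) (habs : a * star b = star b * a) :
    IsCoreInverse (a * b) (z * y) ∧ z * y = y * z := by
  obtain ⟨a1, a2, a3, a4, a5⟩ := hy
  obtain ⟨b1, b2, b3, b4, b5⟩ := hz
  have hy' : IsCoreInverse a y := ⟨a1, a2, a3, a4, a5⟩
  have hz' : IsCoreInverse b z := ⟨b1, b2, b3, b4, b5⟩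
  have e4y : y * a * a = a := by rw [mul_assoc, ← pow_two]; exact a4
  have e4z : z * b * b = b := by rw [mul_assoc, ← pow_two]; exact b4
  have e5y : a * y * y = y := by rw [mul_assoc, ← pow_two]; exact a5
  have e5z : b * z * z = z := by rw [mul_assoc, ← pow_two]; exact b5
  -- commutation facts
  have hby : b * y = y * b := comm_y hy' hab.symm habs.symm
  have h2a : star a * b = b * star a := by
    have := congrArg star habs
    simp only [star_mul, star_star] at this
    exact this.symm
  have haz : a * z = z * a := comm_y hz' hab h2a
  have hbsy : star b * y = y * star b := by
    refine comm_y hy' habs.symm ?_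
    rw [star_star]; exact hab.symm
  have h2y : star y * b = b * star y := by
    have := congrArg star hbsy
    simp only [star_mul, star_star] at this
    exact this
  have hyz : y * z = z * y := comm_y hz' hby.symm h2y
  have hzy : z * y = y * z := hyz.symm
  refine ⟨⟨?_, ?_, ?_, ?_, ?_⟩, hzy⟩
  · -- a*b*(z*y)*(a*b) = a*b
    show a * b * (z * y) * (a * b) = a * b
    simp only [mul_assoc]
    rw [sw hzy (a * b), sw hby (z * (a * b)), sw haz.symm b, sw hab.symm (z * b),
      show b * (z * b) = b from by rw [← mul_assoc]; exact b1,
      cl3 a1 b]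
  · -- z*y*(a*b)*(z*y) = z*y
    show z * y * (a * b) * (z * y) = z * y
    simp only [mul_assoc]
    rw [sw hab (z * y), sw hby.symm (a * (z * y)), sw haz y, sw hyz (a * y),
      show y * (a * y) = y from by rw [← mul_assoc]; exact a2,
      cl3 b2 y]
  · -- star (a*b*(z*y)) = a*b*(z*y)
    have e1' : a * b * (z * y) = (a * y) * (b * z) := by
      simp only [mul_assoc]
      rw [hzy, sw hby z]
    have e2' : (b * z) * (a * y) = (a * y) * (b * z) := by
      simp only [mul_assoc]
      rw [sw haz.symm y, sw hab.symm (z * y), hzy, sw hby z]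
    rw [e1', star_mul, b3, a3, e2']
  · -- z*y*(a*b)^2 = a*b
    show z * y * (a * b) ^ 2 = a * b
    rw [pow_two]
    simp only [mul_assoc]
    rw [sw hab.symm b, cl3 e4y (b * b), sw haz.symm (b * b),
      show z * (b * b) = b from by rw [← mul_assoc]; exact e4z]
  · -- a*b*(z*y)^2 = z*y
    show a * b * (z * y) ^ 2 = z * y
    rw [pow_two]
    simp only [mul_assoc]
    rw [sw hyz y, cl3 e5z (y * y), sw haz (y * y),
      show a * (y * y) = y from by rw [← mul_assoc]; exact e5y]
end

section
/- Let k ≥ 1 be an integer and let a be an element of a unital *-ring R with inner inverse a⁻ (so a a⁻ a = a). Then the following are equivalent: (i) a is group invertible; (ii) u = a^k + 1 − a a⁻ is invertible; (iii) v = a^k + 1 − a⁻ a is invertible. In this case u⁻¹ a^(2k−1) v⁻¹ is the group inverse of a. -/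
/-- `x` is a group inverse of `a`. -/
def IsGroupInverse {R : Type*} [Ring R] (a x : R) : Prop :=
  a * x * a = a ∧ x * a * x = x ∧ a * x = x * a

private theorem jacobson_aux {R : Type*} [Ring R] (a b : R) :
    IsUnit (1 + a * b) → IsUnit (1 + b * a) := by
  rintro ⟨w, hw⟩
  have h1 : (1 + a * b) * ↑w⁻¹ = 1 := by rw [← hw]; exact w.mul_inv
  have h2 : (↑w⁻¹ : R) * (1 + a * b) = 1 := by rw [← hw]; exact w.inv_mul
  refine ⟨⟨1 + b * a, 1 - b * ↑w⁻¹ * a, ?_, ?_⟩, rfl⟩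
  · calc (1 + b * a) * (1 - b * ↑w⁻¹ * a)
        = 1 + b * a - b * (((1 + a * b) * ↑w⁻¹) * a) := by noncomm_ring
      _ = 1 + b * a - b * (1 * a) := by rw [h1]
      _ = 1 := by noncomm_ring
  · calc (1 - b * ↑w⁻¹ * a) * (1 + b * a)
        = 1 + b * a - b * ((↑w⁻¹ * (1 + a * b)) * a) := by noncomm_ring
      _ = 1 + b * a - b * (1 * a) := by rw [h2]
      _ = 1 := by noncomm_ring

private theorem jacobson {R : Type*} [Ring R] (a b : R) :
    IsUnit (1 + a * b) ↔ IsUnit (1 + b * a) :=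
  ⟨jacobson_aux a b, jacobson_aux b a⟩

private theorem fwd_unit {R : Type*} [Ring R] (m : ℕ) (a c x : R)
    (hc : a * c * a = a) (hx1 : a * x * a = a) (hx2 : x * a * x = x)
    (hx3 : a * x = x * a) :
    IsUnit (a ^ (m + 1) + 1 - a * c) := by
  have hcom : Commute a x := hx3
  have f0 : a * (a * x) = a := by rw [hx3, ← mul_assoc, hx1]
  have hid : IsIdempotentElem (a * x) := by
    show (a * x) * (a * x) = a * x
    rw [← mul_assoc, hx1]
  have hpow_e : a ^ (m + 1) * x ^ (m + 1) = a * x := by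
    rw [← hcom.mul_pow (m + 1)]
    exact hid.pow_succ_eq m
  have hpow_e' : x ^ (m + 1) * a ^ (m + 1) = a * x := by
    rw [← hcom.symm.mul_pow (m + 1), hx3.symm]
    exact hid.pow_succ_eq m
  have hcp : a * x ^ (m + 1) = x ^ (m + 1) * a := (hcom.pow_right (m + 1)).eq
  have F1 : a ^ (m + 1) * (a * x) = a ^ (m + 1) := by
    rw [pow_succ, mul_assoc, f0]
  have F2 : (a * c) * (a * x) = a * x := by rw [← mul_assoc, hc]
  have F3 : a ^ (m + 1) * (x ^ (m + 1) * (a * c)) = a * c := by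
    rw [← mul_assoc, hpow_e, ← mul_assoc, hx1]
  have F4 : (a * c) * (x ^ (m + 1) * (a * c)) = x ^ (m + 1) * (a * c) := by
    calc (a * c) * (x ^ (m + 1) * (a * c))
        = (a * c) * ((x ^ (m + 1) * a) * c) := by noncomm_ring
      _ = (a * c) * ((a * x ^ (m + 1)) * c) := by rw [hcp]
      _ = (a * c * a) * (x ^ (m + 1) * c) := by noncomm_ring
      _ = a * (x ^ (m + 1) * c) := by rw [hc]
      _ = (a * x ^ (m + 1)) * c := by noncomm_ring
      _ = (x ^ (m + 1) * a) * c := by rw [hcp]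
      _ = x ^ (m + 1) * (a * c) := by noncomm_ring
  have F5 : (a * x) * a ^ (m + 1) = a ^ (m + 1) := by
    rw [pow_succ', ← mul_assoc, hx1]
  have F6 : (a * c) * a ^ (m + 1) = a ^ (m + 1) := by
    rw [pow_succ', ← mul_assoc, hc]
  have F8 : (a * x) * (a * c) = a * c := by rw [← mul_assoc, hx1]
  have Fpp : (a * c) * (a * c) = a * c := by rw [← mul_assoc, hc]
  have hue : (a ^ (m + 1) + 1 - a * c) * (a * x) = a ^ (m + 1) := by
    calc (a ^ (m + 1) + 1 - a * c) * (a * x)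
        = a ^ (m + 1) * (a * x) + (a * x) - (a * c) * (a * x) := by noncomm_ring
      _ = a ^ (m + 1) + (a * x) - (a * x) := by rw [F1, F2]
      _ = a ^ (m + 1) := by noncomm_ring
  have huw : (a ^ (m + 1) + 1 - a * c) * (x ^ (m + 1) * (a * c)) = a * c := by
    calc (a ^ (m + 1) + 1 - a * c) * (x ^ (m + 1) * (a * c))
        = a ^ (m + 1) * (x ^ (m + 1) * (a * c)) + x ^ (m + 1) * (a * c)
            - (a * c) * (x ^ (m + 1) * (a * c)) := by noncomm_ring
      _ = a * c + x ^ (m + 1) * (a * c) - x ^ (m + 1) * (a * c) := by rw [F3, F4]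
      _ = a * c := by noncomm_ring
  have huv1 : (a ^ (m + 1) + 1 - a * c) * (1 - a * x + x ^ (m + 1) * (a * c)) = 1 := by
    calc (a ^ (m + 1) + 1 - a * c) * (1 - a * x + x ^ (m + 1) * (a * c))
        = (a ^ (m + 1) + 1 - a * c) - (a ^ (m + 1) + 1 - a * c) * (a * x)
            + (a ^ (m + 1) + 1 - a * c) * (x ^ (m + 1) * (a * c)) := by noncomm_ring
      _ = (a ^ (m + 1) + 1 - a * c) - a ^ (m + 1) + a * c := by rw [hue, huw]
      _ = 1 := by noncomm_ring
  have heu : (a * x) * (a ^ (m + 1) + 1 - a * c) = a ^ (m + 1) + (a * x) - a * c := by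
    calc (a * x) * (a ^ (m + 1) + 1 - a * c)
        = (a * x) * a ^ (m + 1) + (a * x) - (a * x) * (a * c) := by noncomm_ring
      _ = a ^ (m + 1) + (a * x) - a * c := by rw [F5, F8]
  have hwu : (x ^ (m + 1) * (a * c)) * (a ^ (m + 1) + 1 - a * c) = a * x := by
    calc (x ^ (m + 1) * (a * c)) * (a ^ (m + 1) + 1 - a * c)
        = x ^ (m + 1) * ((a * c) * a ^ (m + 1)) + x ^ (m + 1) * (a * c)
            - x ^ (m + 1) * ((a * c) * (a * c)) := by noncomm_ring
      _ = x ^ (m + 1) * a ^ (m + 1) + x ^ (m + 1) * (a * c)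
            - x ^ (m + 1) * (a * c) := by rw [F6, Fpp]
      _ = x ^ (m + 1) * a ^ (m + 1) := by noncomm_ring
      _ = a * x := hpow_e'
  have huv2 : (1 - a * x + x ^ (m + 1) * (a * c)) * (a ^ (m + 1) + 1 - a * c) = 1 := by
    calc (1 - a * x + x ^ (m + 1) * (a * c)) * (a ^ (m + 1) + 1 - a * c)
        = (a ^ (m + 1) + 1 - a * c) - (a * x) * (a ^ (m + 1) + 1 - a * c)
            + (x ^ (m + 1) * (a * c)) * (a ^ (m + 1) + 1 - a * c) := by noncomm_ring
      _ = (a ^ (m + 1) + 1 - a * c) - (a ^ (m + 1) + (a * x) - a * c) + a * x := by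
          rw [heu, hwu]
      _ = 1 := by noncomm_ring
  exact ⟨⟨a ^ (m + 1) + 1 - a * c, 1 - a * x + x ^ (m + 1) * (a * c), huv1, huv2⟩, rfl⟩

private theorem part3 {R : Type*} [Ring R] (m : ℕ) (a c ui vi : R)
    (hc : a * c * a = a)
    (h1 : ui * (a ^ (m + 1) + 1 - a * c) = 1)
    (h2 : (a ^ (m + 1) + 1 - a * c) * ui = 1)
    (h3 : vi * (a ^ (m + 1) + 1 - c * a) = 1)
    (h4 : (a ^ (m + 1) + 1 - c * a) * vi = 1) :
    IsGroupInverse a (ui * a ^ (2 * m + 1) * vi) := by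
  have hca : a * (c * a) = a := by rw [← mul_assoc, hc]
  have D1 : (a ^ (m + 1) + 1 - a * c) * a = a ^ (m + 1) * a := by
    calc (a ^ (m + 1) + 1 - a * c) * a = a ^ (m + 1) * a + a - a * c * a := by noncomm_ring
      _ = a ^ (m + 1) * a := by rw [hc]; noncomm_ring
  have D2 : ui * (a ^ (m + 1) * a) = a := by
    rw [← D1, ← mul_assoc, h1, one_mul]
  have D3 : a * (a ^ (m + 1) + 1 - c * a) = a * a ^ (m + 1) := by
    calc a * (a ^ (m + 1) + 1 - c * a) = a * a ^ (m + 1) + a - a * (c * a) := by noncomm_ring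
      _ = a * a ^ (m + 1) := by rw [hca]; noncomm_ring
  have D4 : (a * a ^ (m + 1)) * vi = a := by
    rw [← D3, mul_assoc, h4, mul_one]
  have D5 : vi * a ^ (m + 1) = c * a := by
    have hKq : a ^ (m + 1) * (c * a) = a ^ (m + 1) := by
      rw [pow_succ, mul_assoc, hca]
    have hqq : (c * a) * (c * a) = c * a := by rw [mul_assoc, hca]
    have hvq : (a ^ (m + 1) + 1 - c * a) * (c * a) = a ^ (m + 1) := by
      calc (a ^ (m + 1) + 1 - c * a) * (c * a)
          = a ^ (m + 1) * (c * a) + c * a - (c * a) * (c * a) := by noncomm_ring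
        _ = a ^ (m + 1) + c * a - c * a := by rw [hKq, hqq]
        _ = a ^ (m + 1) := by noncomm_ring
    calc vi * a ^ (m + 1) = vi * ((a ^ (m + 1) + 1 - c * a) * (c * a)) := by rw [hvq]
      _ = (vi * (a ^ (m + 1) + 1 - c * a)) * (c * a) := by rw [← mul_assoc]
      _ = c * a := by rw [h3, one_mul]
  have hs1 : a ^ (2 * m + 1) = a ^ (m + 1) * a ^ m := by
    have h : 2 * m + 1 = (m + 1) + m := by omega
    rw [h, pow_add]
  have hs2 : a ^ (2 * m + 1) = a ^ m * a ^ (m + 1) := by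
    have h : 2 * m + 1 = m + (m + 1) := by omega
    rw [h, pow_add]
  -- hf : ui * a^(m+1) = a^(m+1) * vi
  have w1 : ui * ((a ^ (m + 1) * a) * (a ^ m * vi)) = a ^ (m + 1) * vi := by
    calc ui * ((a ^ (m + 1) * a) * (a ^ m * vi))
        = (ui * (a ^ (m + 1) * a)) * (a ^ m * vi) := by rw [← mul_assoc]
      _ = a * (a ^ m * vi) := by rw [D2]
      _ = (a * a ^ m) * vi := by rw [← mul_assoc]
      _ = a ^ (m + 1) * vi := by rw [← pow_succ']
  have w2 : ui * ((a ^ (m + 1) * a) * (a ^ m * vi)) = ui * a ^ (m + 1) := by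
    calc ui * ((a ^ (m + 1) * a) * (a ^ m * vi))
        = ui * (a ^ m * ((a * a ^ (m + 1)) * vi)) := by
          rw [show (a ^ (m + 1) * a) * (a ^ m * vi) = a ^ m * ((a * a ^ (m + 1)) * vi) from by
            rw [← pow_succ, ← pow_succ', ← mul_assoc, pow_mul_comm, mul_assoc]]
      _ = ui * (a ^ m * a) := by rw [D4]
      _ = ui * a ^ (m + 1) := by rw [← pow_succ]
  have hf : ui * a ^ (m + 1) = a ^ (m + 1) * vi := w2.symm.trans w1
  have hax0 : a * (ui * a ^ (2 * m + 1) * vi) = a ^ (m + 1) * vi := by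
    calc a * (ui * a ^ (2 * m + 1) * vi)
        = (a * (ui * a ^ (m + 1))) * (a ^ m * vi) := by rw [hs1]; noncomm_ring
      _ = (a * (a ^ (m + 1) * vi)) * (a ^ m * vi) := by rw [hf]
      _ = ((a * a ^ (m + 1)) * vi) * (a ^ m * vi) := by noncomm_ring
      _ = a * (a ^ m * vi) := by rw [D4]
      _ = (a * a ^ m) * vi := by rw [← mul_assoc]
      _ = a ^ (m + 1) * vi := by rw [← pow_succ']
  have hx0a : (ui * a ^ (2 * m + 1) * vi) * a = ui * a ^ (m + 1) := by
    calc (ui * a ^ (2 * m + 1) * vi) * a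
        = (ui * a ^ m) * ((a ^ (m + 1) * vi) * a) := by rw [hs2]; noncomm_ring
      _ = (ui * a ^ m) * ((ui * a ^ (m + 1)) * a) := by rw [← hf]
      _ = (ui * a ^ m) * (ui * (a ^ (m + 1) * a)) := by noncomm_ring
      _ = (ui * a ^ m) * a := by rw [D2]
      _ = ui * (a ^ m * a) := by rw [mul_assoc]
      _ = ui * a ^ (m + 1) := by rw [← pow_succ]
  refine ⟨?_, ?_, ?_⟩
  · -- a * x₀ * a = a
    calc a * (ui * a ^ (2 * m + 1) * vi) * a
        = (a ^ (m + 1) * vi) * a := by rw [hax0]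
      _ = (ui * a ^ (m + 1)) * a := by rw [← hf]
      _ = ui * (a ^ (m + 1) * a) := by rw [mul_assoc]
      _ = a := D2
  · -- x₀ * a * x₀ = x₀
    calc (ui * a ^ (2 * m + 1) * vi) * a * (ui * a ^ (2 * m + 1) * vi)
        = (ui * a ^ (2 * m + 1) * vi) * (a * (ui * a ^ (2 * m + 1) * vi)) := by
          rw [mul_assoc]
      _ = (ui * a ^ (2 * m + 1) * vi) * (a ^ (m + 1) * vi) := by rw [hax0]
      _ = (ui * a ^ (2 * m + 1)) * ((vi * a ^ (m + 1)) * vi) := by noncomm_ring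
      _ = (ui * a ^ (2 * m + 1)) * ((c * a) * vi) := by rw [D5]
      _ = (ui * (a ^ (2 * m) * (a * (c * a)))) * vi := by rw [pow_succ]; noncomm_ring
      _ = (ui * (a ^ (2 * m) * a)) * vi := by rw [hca]
      _ = ui * a ^ (2 * m + 1) * vi := by rw [← pow_succ]
  · -- a * x₀ = x₀ * a
    rw [hax0, hx0a, hf]

/-- Let `k ≥ 1` and let `a` be an element of a unital `*`-ring with inner
inverse `c`. Then `a` is group invertible iff `u = a^k + 1 - a c` is invertible
iff `v = a^k + 1 - c a` is invertible; in this case `u⁻¹ a^(2k-1) v⁻¹` is the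
group inverse of `a`. -/
theorem stmt_4 {R : Type*} [Ring R] [StarRing R] (k : ℕ) (hk : 1 ≤ k) (a c : R)
    (hc : a * c * a = a) :
    ((∃ x, IsGroupInverse a x) ↔ IsUnit (a ^ k + 1 - a * c)) ∧
    ((∃ x, IsGroupInverse a x) ↔ IsUnit (a ^ k + 1 - c * a)) ∧
    (∀ ui vi : R,
      ui * (a ^ k + 1 - a * c) = 1 → (a ^ k + 1 - a * c) * ui = 1 →
      vi * (a ^ k + 1 - c * a) = 1 → (a ^ k + 1 - c * a) * vi = 1 →
      IsGroupInverse a (ui * a ^ (2 * k - 1) * vi)) := by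
  obtain ⟨m, rfl⟩ : ∃ m, k = m + 1 := ⟨k - 1, by omega⟩
  have jac : IsUnit (a ^ (m + 1) + 1 - a * c) ↔ IsUnit (a ^ (m + 1) + 1 - c * a) := by
    have e1 : a ^ (m + 1) + 1 - a * c = 1 + a * (a ^ m - c) := by
      rw [mul_sub, ← pow_succ']; noncomm_ring
    have e2 : a ^ (m + 1) + 1 - c * a = 1 + (a ^ m - c) * a := by
      rw [sub_mul, ← pow_succ]; noncomm_ring
    rw [e1, e2]
    exact jacobson a (a ^ m - c)
  have fwdu : (∃ x, IsGroupInverse a x) → IsUnit (a ^ (m + 1) + 1 - a * c) := by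
    rintro ⟨x, hx1, hx2, hx3⟩
    exact fwd_unit m a c x hc hx1 hx2 hx3
  have bwd : IsUnit (a ^ (m + 1) + 1 - a * c) → (∃ x, IsGroupInverse a x) := by
    intro hu
    obtain ⟨U, hU⟩ := hu
    obtain ⟨V, hV⟩ := jac.mp ⟨U, hU⟩
    refine ⟨(↑U⁻¹ : R) * a ^ (2 * m + 1) * (↑V⁻¹ : R), part3 m a c _ _ hc ?_ ?_ ?_ ?_⟩
    · rw [← hU]; exact U.inv_mul
    · rw [← hU]; exact U.mul_inv
    · rw [← hV]; exact V.inv_mul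
    · rw [← hV]; exact V.mul_inv
  refine ⟨⟨fwdu, bwd⟩, ⟨fun h => jac.mp (fwdu h), fun h => bwd (jac.mpr h)⟩, ?_⟩
  intro ui vi h1 h2 h3 h4
  have hkk : 2 * (m + 1) - 1 = 2 * m + 1 := by omega
  rw [hkk]
  exact part3 m a c ui vi hc h1 h2 h3 h4
end

section
/- Let k ≥ 1 be an integer and let a be a regular element of a unital *-ring R. If (a*)^k + 1 − a a⁻ is invertible for every inner inverse a⁻ of a, then a is core invertible. -/
/-- If `y` is a {1,3}-inverse of `a` and `a ∈ a²R ∩ Ra²`, then `a` is core invertible. -/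
lemma core_con_aux {R : Type*} [Ring R] [StarRing R] (a y s t : R)
    (hy1 : a * y * a = a) (hy3 : star (a * y) = a * y)
    (h1 : a * a * s = a) (h2 : t * (a * a) = a) :
    ∃ x, IsCoreInverse a x := by
  have hta : t * a = a * s := by
    conv_lhs => rw [← h1]
    rw [← mul_assoc, h2]
  have R1x : ∀ z, a * (y * (a * z)) = a * z := fun z => by
    rw [← mul_assoc, ← mul_assoc, hy1]
  have R1 : a * (y * a) = a := by rw [← mul_assoc, hy1]
  have R2x : ∀ z, a * (a * (s * z)) = a * z := fun z => by
    simp only [← mul_assoc, h1]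
  have R2 : a * (a * s) = a := by rw [← mul_assoc, h1]
  have R3x : ∀ z, t * (a * (a * z)) = a * z := fun z => by
    simp only [← mul_assoc]
    rw [mul_assoc t a a, h2]
  have R4x : ∀ z, a * (s * (a * z)) = a * z := fun z => by
    rw [← mul_assoc, ← mul_assoc, ← hta, mul_assoc t a a, h2]
  have R4 : a * (s * a) = a := by rw [← mul_assoc, ← hta, mul_assoc, h2]
  have R5x : ∀ z, a * (s * (s * (a * z))) = a * (s * z) := fun z => by
    rw [← mul_assoc, ← hta, mul_assoc, R4x z, ← mul_assoc, hta, mul_assoc]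
  have R5 : a * (s * (s * a)) = a * s := by
    rw [← mul_assoc, ← hta, mul_assoc, R4, hta]
  have R6x : ∀ z, a * (s * (y * (a * z))) = a * (s * z) := fun z => by
    rw [← mul_assoc, ← hta, mul_assoc, R1x z, ← mul_assoc, hta, mul_assoc]
  have R6 : a * (s * (y * a)) = a * s := by
    rw [← mul_assoc, ← hta, mul_assoc, R1, hta]
  set x := t * a * s * (a * y) with hx
  have c0 : a * x = a * y := by
    rw [hx]
    simp only [mul_assoc, R1x, R2x, R3x, R4x, R5x, R6x, hta, R1, R2, R4, R5, R6, h2]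
  refine ⟨x, ?_, ?_, ?_, ?_, ?_⟩
  · rw [c0, hy1]
  · rw [hx]
    simp only [mul_assoc, R1x, R2x, R3x, R4x, R5x, R6x, hta, R1, R2, R4, R5, R6, h2]
  · rw [c0, hy3, ← c0]
  · rw [sq, hx]
    simp only [mul_assoc, R1x, R2x, R3x, R4x, R5x, R6x, hta, R1, R2, R4, R5, R6, h2]
  · rw [sq, hx]
    simp only [mul_assoc, R1x, R2x, R3x, R4x, R5x, R6x, hta, R1, R2, R4, R5, R6, h2]

/-- Let `k ≥ 1` and let `a` be regular. If `(a*)^k + 1 - a a⁻` is invertible for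
every inner inverse `a⁻` of `a`, then `a` is core invertible. -/
theorem stmt_6 {R : Type*} [Ring R] [StarRing R] (k : ℕ) (hk : 1 ≤ k) (a : R)
    (hreg : ∃ c, a * c * a = a)
    (h : ∀ c, a * c * a = a → IsUnit ((star a) ^ k + 1 - a * c)) :
    ∃ x, IsCoreInverse a x := by
  obtain ⟨m, rfl⟩ : ∃ m, k = m + 1 := ⟨k - 1, (Nat.succ_pred_eq_of_pos hk).symm⟩
  obtain ⟨c, hc⟩ := hreg
  obtain ⟨u₀, hu₀⟩ := h c hc
  -- Step 1: build a {1,3}-inverse `y = star t` of `a`.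
  have hA : (u₀ : R) * a = star a ^ (m + 1) * a := by
    rw [hu₀, sub_mul, add_mul, one_mul, hc, add_sub_cancel_right]
  set t : R := (↑u₀⁻¹ : R) * star a ^ m with htdef
  have ht : t * (star a * a) = a := by
    rw [htdef, mul_assoc, ← mul_assoc (star a ^ m), ← pow_succ, ← hA, ← mul_assoc,
      Units.inv_mul, one_mul]
  have hpa : star a * a * star t = star a := by
    have h6 := congrArg star ht
    simp only [star_mul, star_star] at h6
    exact h6
  have hty : t * star a = a * star t := by
    conv_lhs => rw [← hpa]
    rw [← mul_assoc, ht]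
  set y : R := star t with hydef
  have hy1 : a * y * a = a := by
    rw [hydef, ← hty, mul_assoc, ht]
  have hy3 : star (a * y) = a * y := by
    rw [hydef, ← hty, star_mul, star_star]
    exact hty.symm
  -- Step 2: apply the hypothesis to `y`, and pass to the star of the unit.
  have hu := h y hy1
  have hpp : (a * y) * (a * y) = a * y := by rw [← mul_assoc, hy1]
  have hwu : IsUnit ((a : R) ^ (m + 1) + 1 - a * y) := by
    have h7 : star ((star a) ^ (m + 1) + 1 - a * y) = a ^ (m + 1) + 1 - a * y := by
      simp only [star_sub, star_add, star_pow, star_star, star_one, hy3]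
    rw [← h7]
    exact hu.star
  obtain ⟨w, hw⟩ := hwu
  have hwa : (w : R) * a = a ^ (m + 2) := by
    rw [hw, sub_mul, add_mul, one_mul, hy1, add_sub_cancel_right, ← pow_succ]
  have h2' : ((↑w⁻¹ : R) * a ^ m) * (a * a) = a := by
    rw [mul_assoc, ← mul_assoc (a ^ m), ← pow_succ, ← pow_succ, ← hwa, ← mul_assoc,
      Units.inv_mul, one_mul]
  have hpw : a * y * (w : R) = a ^ (m + 1) := by
    rw [hw, mul_sub, mul_add, mul_one, hpp, add_sub_cancel_right, pow_succ',
      ← mul_assoc, hy1]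
  have hpv : a * y = a ^ (m + 1) * (↑w⁻¹ : R) := by
    rw [← hpw, mul_assoc, Units.mul_inv, mul_one]
  -- Step 3: produce `s` with `a * a * s = a` and conclude.
  rcases m with _ | n
  · -- case k = 1
    have hqi : (1 - a * y) * (↑w⁻¹ : R) = 1 - a * y := by
      have hq : (1 - a * y) * (w : R) = 1 - a * y := by
        rw [hw, pow_one, sub_mul, one_mul, mul_sub, mul_add, mul_one, hy1, hpp]
        abel
      conv_lhs => rw [← hq]
      rw [mul_assoc, Units.mul_inv, mul_one]
    have e1 : (↑w⁻¹ : R) * a = 1 - (↑w⁻¹ : R) * (1 - a * y) := by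
      have h8 : (↑w⁻¹ : R) * ((w : R)) = 1 := Units.inv_mul w
      rw [hw, pow_one, mul_sub, mul_add, mul_one] at h8
      rw [mul_sub, mul_one, ← h8]
      abel
    have h1mp : (1 - a * y) * (1 - a * y) = 1 - a * y := by
      rw [mul_sub, mul_one, sub_mul, one_mul, hpp]
      abel
    have e2 : (↑w⁻¹ : R) * (1 - a * y) = a * y * (↑w⁻¹ : R) * (1 - a * y) + (1 - a * y) := by
      calc (↑w⁻¹ : R) * (1 - a * y)
          = (a * y) * ((↑w⁻¹ : R) * (1 - a * y)) + (1 - a * y) * ((↑w⁻¹ : R) * (1 - a * y)) := by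
            rw [← add_mul, add_sub_cancel, one_mul]
        _ = a * y * (↑w⁻¹ : R) * (1 - a * y) + (1 - a * y) := by
            rw [← mul_assoc, ← mul_assoc, hqi, h1mp]
    set j : R := a * y * (↑w⁻¹ : R) * (1 - a * y) with hjdef
    have hfin : (↑w⁻¹ : R) * a = a * y - j := by
      rw [e1, e2]
      abel
    have hz : (1 - a * y) * (a * y) = 0 := by
      rw [sub_mul, one_mul, hpp, sub_self]
    have hzx : ∀ z : R, (1 - a * y) * (a * (y * z)) = 0 := fun z => by
      rw [← mul_assoc a y z, ← mul_assoc, hz, zero_mul]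
    have hj2 : j * j = 0 := by
      rw [hjdef]
      simp only [mul_assoc]
      rw [hzx]
      simp only [mul_zero]
    have haw : a * (↑w⁻¹ : R) = a * y := by
      rw [hpv, pow_one]
    have hkey : a * a * (y * (1 - j)) = a := by
      have step1 : a * ((↑w⁻¹ : R) * a) = a := by
        rw [← mul_assoc, haw, hy1]
      have step2 : a * (a * y) - a * j = a := by
        rw [← mul_sub, ← hfin, step1]
      have step3 : a * a * y = a + a * j := by
        rw [mul_assoc]
        exact sub_eq_iff_eq_add.mp step2
      calc a * a * (y * (1 - j)) = a * a * y * (1 - j) := (mul_assoc (a * a) y (1 - j)).symm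
        _ = (a + a * j) * (1 - j) := by rw [step3]
        _ = a + a * j - (a * j + a * (j * j)) := by
            rw [add_mul, mul_sub, mul_sub, mul_one, mul_one, mul_assoc a j j]
            abel
        _ = a := by rw [hj2, mul_zero]; abel
    exact core_con_aux a y _ _ hy1 hy3 hkey h2'
  · -- case k ≥ 2
    have hkey : a * a * (a ^ n * ((↑w⁻¹ : R) * a)) = a := by
      calc a * a * (a ^ n * ((↑w⁻¹ : R) * a))
          = a ^ (n + 2) * (↑w⁻¹ : R) * a := by
            have hp2 : a * a * a ^ n = a ^ (n + 2) := by
              rw [← pow_two, ← pow_add, Nat.add_comm 2 n]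
            simp only [← mul_assoc]
            rw [hp2]
        _ = a * y * a := by rw [← hpv]
        _ = a := hy1
    exact core_con_aux a y _ _ hy1 hy3 hkey h2'
end

section
/- Let k ≥ 1 be an integer, let a be a core invertible element of a unital *-ring R, and let a⁻ be any inner inverse of a. Then the following are equivalent: (i) (a*)^k + 1 − a a⁻ is invertible; (ii) (a*)^(k+1) + 1 − a a⁻ is invertible; (iii) a* a + 1 − a a⁻ is invertible. In this case the core inverse of a equals (a* a + 1 − a a⁻)⁻¹ a* and also equals a^k · (((a*)^(k+1) + 1 − a a⁻)⁻¹)*. -/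
section Aux

variable {R : Type*} [Ring R]

/-- `g` has a two-sided inverse in the corner ring `eRe`. -/
def CornerInv (e g : R) : Prop :=
  ∃ h, e * h = h ∧ h * e = h ∧ g * h = e ∧ h * g = e

lemma isUnit_corner_iff (e g : R) (hee : e * e = e) (heg : e * g = g) (hge : g * e = g) :
    IsUnit (g + 1 - e) ↔ CornerInv e g := by
  constructor
  · rintro ⟨u, hu⟩
    have inv1 : (g + 1 - e) * (↑u⁻¹ : R) = 1 := by rw [← hu]; exact u.mul_inv
    have inv2 : (↑u⁻¹ : R) * (g + 1 - e) = 1 := by rw [← hu]; exact u.inv_mul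
    have key1 : e * (g + 1 - e) = g := by
      have h0 : e * (g + 1 - e) = e * g + e - e * e := by noncomm_ring
      rw [h0, heg, hee]; abel
    have key2 : (g + 1 - e) * e = g := by
      have h0 : (g + 1 - e) * e = g * e + e - e * e := by noncomm_ring
      rw [h0, hge, hee]; abel
    have hgw : g * (↑u⁻¹ : R) = e := by
      calc g * (↑u⁻¹ : R) = (e * (g + 1 - e)) * (↑u⁻¹ : R) := by rw [key1]
        _ = e * ((g + 1 - e) * (↑u⁻¹ : R)) := by rw [mul_assoc]
        _ = e := by rw [inv1, mul_one]
    have hwg : (↑u⁻¹ : R) * g = e := by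
      calc (↑u⁻¹ : R) * g = (↑u⁻¹ : R) * ((g + 1 - e) * e) := by rw [key2]
        _ = ((↑u⁻¹ : R) * (g + 1 - e)) * e := by rw [← mul_assoc]
        _ = e := by rw [inv2, one_mul]
    refine ⟨e * ↑u⁻¹ * e, ?_, ?_, ?_, ?_⟩
    · rw [← mul_assoc, ← mul_assoc, hee]
    · rw [mul_assoc (e * ↑u⁻¹) e e, hee]
    · rw [← mul_assoc, ← mul_assoc, hge, hgw, hee]
    · rw [mul_assoc (e * ↑u⁻¹) e g, heg, mul_assoc, hwg, hee]
  · rintro ⟨h, heh, hhe, hgh, hhg⟩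
    apply isUnit_iff_exists.2
    refine ⟨h + 1 - e, ?_, ?_⟩
    · have h0 : (g + 1 - e) * (h + 1 - e)
          = g * h + (g - g * e) + (h - e * h) + 1 - e - e + e * e := by noncomm_ring
      rw [h0, hgh, hge, heh, hee]; abel
    · have h0 : (h + 1 - e) * (g + 1 - e)
          = h * g + (h - h * e) + (g - e * g) + 1 - e - e + e * e := by noncomm_ring
      rw [h0, hhg, hhe, heg, hee]; abel

lemma factor_iff (f p s : R) (hff : f * f = f) (hpp : p * p = p) (hpf : p * f = f)
    (hfp : f * p = p) (hsf : s * f = s) :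
    IsUnit (s + 1 - p) ↔ IsUnit (p * s + 1 - f) := by
  have hA : (1 + f - p) * (1 + p - f) = 1 := by
    have h0 : (1 + f - p) * (1 + p - f) = 1 + f * p + p * f - f * f - p * p := by noncomm_ring
    rw [h0, hfp, hpf, hff, hpp]; abel
  have hA' : (1 + p - f) * (1 + f - p) = 1 := by
    have h0 : (1 + p - f) * (1 + f - p) = 1 + f * p + p * f - f * f - p * p := by noncomm_ring
    rw [h0, hfp, hpf, hff, hpp]; abel
  have hxx : (s - f * s) * (s - f * s) = 0 := by
    have h0 : (s - f * s) * (s - f * s)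
        = (s * s - (s * f) * s) + ((f * (s * f)) * s - (f * s) * s) := by noncomm_ring
    rw [h0, hsf]; abel
  have hC : (1 + (s - f * s)) * (1 - (s - f * s)) = 1 := by
    have h0 : (1 + (s - f * s)) * (1 - (s - f * s))
        = 1 - (s - f * s) * (s - f * s) := by noncomm_ring
    rw [h0, hxx, sub_zero]
  have hC' : (1 - (s - f * s)) * (1 + (s - f * s)) = 1 := by
    have h0 : (1 - (s - f * s)) * (1 + (s - f * s))
        = 1 - (s - f * s) * (s - f * s) := by noncomm_ring
    rw [h0, hxx, sub_zero]
  have hBC : (p * s + 1 - f) * (1 + (s - f * s)) = p * s + 1 + s - f * s - f := by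
    have h0 : (p * s + 1 - f) * (1 + (s - f * s))
        = (p * s + 1 + s - f * s - f) + (p * (s * s) - p * ((s * f) * s))
          + ((f * f) * s - f * s) := by noncomm_ring
    rw [h0, hsf, hff]; abel
  have hABC : (1 + f - p) * (p * s + 1 + s - f * s - f) = s + 1 - p := by
    have h0 : (1 + f - p) * (p * s + 1 + s - f * s - f)
        = (s + 1 - p) + ((f * p) * s - p * s) + (p * s - (p * p) * s)
          + ((p * f) * s - f * s) + (f * s - (f * f) * s) + (p * f - f) + (f - f * f) := by
      noncomm_ring
    rw [h0, hfp, hpp, hpf, hff]; abel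
  have key : (1 + f - p) * ((p * s + 1 - f) * (1 + (s - f * s))) = s + 1 - p := by
    rw [hBC, hABC]
  let UA : Rˣ := ⟨1 + f - p, 1 + p - f, hA, hA'⟩
  let UC : Rˣ := ⟨1 + (s - f * s), 1 - (s - f * s), hC, hC'⟩
  have key' : (UA : R) * ((p * s + 1 - f) * (UC : R)) = s + 1 - p := key
  rw [← key', Units.isUnit_units_mul, Units.isUnit_mul_units]

lemma cornerInv_mul_right (e g u : R) (hu : CornerInv e u) (heu : e * u = u)
    (hge : g * e = g) : CornerInv e (g * u) ↔ CornerInv e g := by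
  obtain ⟨u', hu1, hu2, hu3, hu4⟩ := hu
  constructor
  · rintro ⟨m, hm1, hm2, hm3, hm4⟩
    have t1 : (m * g) * u = e := by rw [mul_assoc, hm4]
    have t2 : m * g = u' := by
      have t : ((m * g) * u) * u' = e * u' := by rw [t1]
      rw [mul_assoc (m * g) u u', hu3, hu1] at t
      rw [mul_assoc, hge] at t
      exact t
    refine ⟨u * m, ?_, ?_, ?_, ?_⟩
    · rw [← mul_assoc, heu]
    · rw [mul_assoc, hm2]
    · rw [← mul_assoc, hm3]
    · rw [mul_assoc, t2, hu3]
  · rintro ⟨h, hh1, hh2, hh3, hh4⟩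
    refine ⟨u' * h, ?_, ?_, ?_, ?_⟩
    · rw [← mul_assoc, hu1]
    · rw [mul_assoc, hh2]
    · rw [mul_assoc g u (u' * h), ← mul_assoc u u' h, hu3, hh1, hh3]
    · rw [mul_assoc u' h (g * u), ← mul_assoc h g u, hh4, heu, hu4]

lemma cornerInv_mul_left (e g u : R) (hu : CornerInv e u) (heu : e * u = u) (hue : u * e = u)
    (heg : e * g = g) : CornerInv e (u * g) ↔ CornerInv e g := by
  obtain ⟨u', hu1, hu2, hu3, hu4⟩ := hu
  constructor
  · rintro ⟨m, hm1, hm2, hm3, hm4⟩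
    have t1 : u * (g * m) = e := by rw [← mul_assoc, hm3]
    have t2 : g * m = u' := by
      have t : u' * (u * (g * m)) = u' * e := by rw [t1]
      rw [← mul_assoc u' u (g * m), hu4, hu2] at t
      rw [← mul_assoc, heg] at t
      exact t
    refine ⟨m * u, ?_, ?_, ?_, ?_⟩
    · rw [← mul_assoc, hm1]
    · rw [mul_assoc, hue]
    · rw [← mul_assoc, t2, hu4]
    · rw [mul_assoc, hm4]
  · rintro ⟨h, hh1, hh2, hh3, hh4⟩
    refine ⟨h * u', ?_, ?_, ?_, ?_⟩
    · rw [← mul_assoc, hh1]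
    · rw [mul_assoc, hu2]
    · rw [mul_assoc u g (h * u'), ← mul_assoc g h u', hh3, hu1, hu3]
    · rw [mul_assoc h u' (u * g), ← mul_assoc u' u g, hu4, heg, hh4]

lemma cornerInv_transport (a y t : R) (h1 : a * y * a = a) (h2 : y * a * y = y)
    (htq : t * (y * a) = t) (hqt : (y * a) * t = t) :
    CornerInv (y * a) t ↔ CornerInv (a * y) (a * t * y) := by
  constructor
  · rintro ⟨h, hh1, hh2, hh3, hh4⟩
    refine ⟨a * h * y, ?_, ?_, ?_, ?_⟩
    · calc (a * y) * (a * h * y) = a * ((y * a) * h) * y := by noncomm_ring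
        _ = a * h * y := by rw [hh1]
    · calc (a * h * y) * (a * y) = (a * h) * ((y * a) * y) := by noncomm_ring
        _ = a * h * y := by rw [h2]
    · calc (a * t * y) * (a * h * y) = a * ((t * (y * a)) * h) * y := by noncomm_ring
        _ = a * (t * h) * y := by rw [htq]
        _ = a * ((y * a) * y) := by rw [hh3, mul_assoc]
        _ = a * y := by rw [h2]
    · calc (a * h * y) * (a * t * y) = a * ((h * ((y * a) * t)) * y) := by noncomm_ring
        _ = a * ((h * t) * y) := by rw [hqt]
        _ = a * ((y * a) * y) := by rw [hh4, mul_assoc]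
        _ = a * y := by rw [h2]
  · rintro ⟨h, hh1, hh2, hh3, hh4⟩
    refine ⟨y * h * a, ?_, ?_, ?_, ?_⟩
    · calc (y * a) * (y * h * a) = y * ((a * y) * h) * a := by noncomm_ring
        _ = y * h * a := by rw [hh1]
    · calc (y * h * a) * (y * a) = (y * h) * ((a * y) * a) := by noncomm_ring
        _ = y * h * a := by rw [h1]
    · calc t * (y * h * a) = ((y * a) * t) * (y * h * a) := by rw [hqt]
        _ = y * ((a * t * y) * h) * a := by noncomm_ring
        _ = y * ((a * y) * a) := by rw [hh3, mul_assoc]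
        _ = y * a := by rw [h1]
    · calc (y * h * a) * t = (y * h * a) * (t * (y * a)) := by rw [htq]
        _ = y * ((h * (a * t * y)) * a) := by noncomm_ring
        _ = y * ((a * y) * a) := by rw [hh4, mul_assoc]
        _ = y * a := by rw [h1]

end Aux

/-- Let `k ≥ 1`, let `a` be core invertible with core inverse `y`, and let `c`
be any inner inverse of `a`. Then `(a*)^k + 1 - a c`, `(a*)^(k+1) + 1 - a c` and
`a* a + 1 - a c` are simultaneously invertible, in which case
`y = (a* a + 1 - a c)⁻¹ a* = a^k (((a*)^(k+1) + 1 - a c)⁻¹)*`. -/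
theorem stmt_7 {R : Type*} [Ring R] [StarRing R] (k : ℕ) (hk : 1 ≤ k) (a y c : R)
    (hy : IsCoreInverse a y) (hc : a * c * a = a) :
    (IsUnit ((star a) ^ k + 1 - a * c) ↔ IsUnit ((star a) ^ (k + 1) + 1 - a * c)) ∧
    (IsUnit ((star a) ^ k + 1 - a * c) ↔ IsUnit (star a * a + 1 - a * c)) ∧
    (∀ w, w * (star a * a + 1 - a * c) = 1 → (star a * a + 1 - a * c) * w = 1 →
      y = w * star a) ∧
    (∀ w, w * ((star a) ^ (k + 1) + 1 - a * c) = 1 →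
      ((star a) ^ (k + 1) + 1 - a * c) * w = 1 →
      y = a ^ k * star w) := by
  obtain ⟨h1, h2, h3, h4, h5⟩ := hy
  have d1 : y * (a * a) = a := by rw [← pow_two]; exact h4
  have d2 : a * (y * y) = y := by rw [← pow_two]; exact h5
  have hee : (a * y) * (a * y) = a * y := by rw [← mul_assoc, h1]
  have hpp : (a * c) * (a * c) = a * c := by rw [← mul_assoc, hc]
  have hpe : (a * c) * (a * y) = a * y := by rw [← mul_assoc, hc]
  have hep : (a * y) * (a * c) = a * c := by rw [← mul_assoc, h1]
  have hpy : (a * c) * y = y := by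
    calc (a * c) * y = (a * c) * (a * (y * y)) := by rw [d2]
      _ = ((a * c) * a) * (y * y) := by noncomm_ring
      _ = a * (y * y) := by rw [hc]
      _ = y := d2
  have hqq : (y * a) * (y * a) = y * a := by rw [← mul_assoc, h2]
  have hpq : (a * c) * (y * a) = y * a := by rw [← mul_assoc, hpy]
  have hqp : (y * a) * (a * c) = a * c := by
    calc (y * a) * (a * c) = (y * (a * a)) * c := by noncomm_ring
      _ = a * c := by rw [d1]
  have hae : star a * (a * y) = star a := by rw [← h3, ← star_mul, h1]
  have hpow : ∀ j : ℕ, (star a) ^ (j + 1) * (a * y) = (star a) ^ (j + 1) := by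
    intro j; rw [pow_succ, mul_assoc, hae]
  have hq_e : (y * a) * (a * y) = a * y := by
    calc (y * a) * (a * y) = (y * (a * a)) * y := by noncomm_ring
      _ = a * y := by rw [d1]
  have hey : (a * y) * y = y := by rw [mul_assoc, d2]
  have hye : y * (a * y) = y := by rw [← mul_assoc, h2]
  have haq : a * (y * a) = a := by rw [← mul_assoc, h1]
  have hsaaq : (star a * a) * (y * a) = star a * a := by
    calc (star a * a) * (y * a) = star a * (a * (y * a)) := by noncomm_ring
      _ = star a * a := by rw [haq]
  -- formula identities
  have hvy : (star a * a + 1 - a * c) * y = star a := by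
    calc (star a * a + 1 - a * c) * y = star a * (a * y) + y - (a * c) * y := by noncomm_ring
      _ = star a + y - y := by rw [hae, hpy]
      _ = star a := by abel
  have hyapow : ∀ n : ℕ, y * a ^ (n + 1 + 1) = a ^ (n + 1) := by
    intro n
    induction n with
    | zero => simpa using h4
    | succ n ih =>
      calc y * a ^ (n + 1 + 1 + 1) = y * (a ^ (n + 1 + 1) * a) := by rw [pow_succ]
        _ = (y * a ^ (n + 1 + 1)) * a := by rw [← mul_assoc]
        _ = a ^ (n + 1) * a := by rw [ih]
        _ = a ^ (n + 1 + 1) := by rw [← pow_succ]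
  have hyp' : y * star (a * c) = y := by
    have s1 : y * star (a * y) = y := by rw [h3]; exact hye
    calc y * star (a * c) = (y * star (a * y)) * star (a * c) := by rw [s1]
      _ = y * (star (a * y) * star (a * c)) := by rw [mul_assoc]
      _ = y * star ((a * c) * (a * y)) := by rw [← star_mul]
      _ = y * star (a * y) := by rw [hpe]
      _ = y := s1
  obtain ⟨m, rfl⟩ : ∃ m, k = m + 1 := ⟨k - 1, by omega⟩
  -- reduction of the units `(a*)^(j+1) + 1 - ac` to the corner ring
  have hcup : ∀ j : ℕ, IsUnit ((star a) ^ (j + 1) + 1 - a * c) ↔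
      CornerInv (a * y) ((a * c) * (star a) ^ (j + 1)) := by
    intro j
    rw [factor_iff (a * y) (a * c) ((star a) ^ (j + 1)) hee hpp hpe hep (hpow j)]
    exact isUnit_corner_iff (a * y) ((a * c) * (star a) ^ (j + 1)) hee
      (by rw [← mul_assoc, hep]) (by rw [mul_assoc, hpow j])
  -- the corner element `e * a*` is invertible in the corner ring
  have hesy : (a * y) * star y = star y := by
    calc (a * y) * star y = star (a * y) * star y := by rw [h3]
      _ = star (y * (a * y)) := by rw [← star_mul]
      _ = star y := by rw [hye]
  have hsye : star y * (a * y) = star y := by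
    calc star y * (a * y) = star y * star (a * y) := by rw [h3]
      _ = star ((a * y) * y) := by rw [← star_mul]
      _ = star y := by rw [hey]
  have hc3 : ((a * y) * star a) * star y = a * y := by
    calc ((a * y) * star a) * star y = (a * y) * (star a * star y) := by rw [mul_assoc]
      _ = (a * y) * star (y * a) := by rw [← star_mul]
      _ = star (a * y) * star (y * a) := by rw [h3]
      _ = star ((y * a) * (a * y)) := by rw [← star_mul]
      _ = star (a * y) := by rw [hq_e]
      _ = a * y := h3
  have hc4 : star y * ((a * y) * star a) = a * y := by
    calc star y * ((a * y) * star a) = (star y * (a * y)) * star a := by rw [← mul_assoc]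
      _ = star y * star a := by rw [hsye]
      _ = star (a * y) := by rw [← star_mul]
      _ = a * y := h3
  have hU : CornerInv (a * y) ((a * y) * star a) := ⟨star y, hesy, hsye, hc3, hc4⟩
  have hstep : ∀ j : ℕ, CornerInv (a * y) ((a * c) * (star a) ^ (j + 1)) ↔
      CornerInv (a * y) ((a * c) * (star a) ^ (j + 1 + 1)) := by
    intro j
    have hgu : ((a * c) * (star a) ^ (j + 1)) * ((a * y) * star a)
        = (a * c) * (star a) ^ (j + 1 + 1) := by
      calc ((a * c) * (star a) ^ (j + 1)) * ((a * y) * star a)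
          = (a * c) * (((star a) ^ (j + 1) * (a * y)) * star a) := by noncomm_ring
        _ = (a * c) * ((star a) ^ (j + 1) * star a) := by rw [hpow j]
        _ = (a * c) * (star a) ^ (j + 1 + 1) := by rw [← pow_succ]
    have H := cornerInv_mul_right (a * y) ((a * c) * (star a) ^ (j + 1)) ((a * y) * star a) hU
      (by rw [← mul_assoc, hee]) (by rw [mul_assoc, hpow j])
    rw [hgu] at H
    exact H.symm
  have hchain : ∀ j : ℕ, CornerInv (a * y) ((a * c) * (star a) ^ (j + 1)) ↔
      CornerInv (a * y) ((a * c) * star a) := by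
    intro j
    induction j with
    | zero => rw [zero_add, pow_one]
    | succ n ih => exact (hstep n).symm.trans ih
  -- reduction of `a* a + 1 - ac` to the corner ring
  have hvq : IsUnit (star a * a + 1 - a * c) ↔
      CornerInv (y * a) ((a * c) * (star a * a)) := by
    rw [factor_iff (y * a) (a * c) (star a * a) hqq hpp hpq hqp hsaaq]
    exact isUnit_corner_iff (y * a) ((a * c) * (star a * a)) hqq
      (by rw [← mul_assoc, hqp]) (by rw [mul_assoc, hsaaq])
  have hvt : CornerInv (y * a) ((a * c) * (star a * a)) ↔
      CornerInv (a * y) (a * ((a * c) * (star a * a)) * y) :=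
    cornerInv_transport a y _ h1 h2 (by rw [mul_assoc, hsaaq]) (by rw [← mul_assoc, hqp])
  have hsimp : a * ((a * c) * (star a * a)) * y = (a * (a * c)) * star a := by
    calc a * ((a * c) * (star a * a)) * y
        = (a * (a * c)) * (star a * (a * y)) := by noncomm_ring
      _ = (a * (a * c)) * star a := by rw [hae]
  have hUL : CornerInv (a * y) (a * (a * y)) :=
    ⟨y, hey, hye, by rw [mul_assoc, hey], by rw [← mul_assoc, hq_e]⟩
  have hαg : (a * (a * y)) * ((a * c) * star a) = (a * (a * c)) * star a := by
    calc (a * (a * y)) * ((a * c) * star a)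
        = a * (((a * y) * (a * c)) * star a) := by noncomm_ring
      _ = a * ((a * c) * star a) := by rw [hep]
      _ = (a * (a * c)) * star a := by noncomm_ring
  have hML : CornerInv (a * y) ((a * (a * y)) * ((a * c) * star a)) ↔
      CornerInv (a * y) ((a * c) * star a) :=
    cornerInv_mul_left (a * y) ((a * c) * star a) (a * (a * y)) hUL
      (by rw [← mul_assoc, h1]) (by rw [mul_assoc, hee]) (by rw [← mul_assoc, hep])
  have hviff : IsUnit (star a * a + 1 - a * c) ↔ CornerInv (a * y) ((a * c) * star a) := by
    rw [hvq, hvt, hsimp, ← hαg, hML]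
  refine ⟨?_, ?_, ?_, ?_⟩
  · exact (hcup m).trans ((hstep m).trans (hcup (m + 1)).symm)
  · exact (hcup m).trans ((hchain m).trans hviff.symm)
  · intro w hw1 hw2
    calc y = 1 * y := (one_mul y).symm
      _ = (w * (star a * a + 1 - a * c)) * y := by rw [hw1]
      _ = w * ((star a * a + 1 - a * c) * y) := by rw [mul_assoc]
      _ = w * star a := by rw [hvy]
  · intro w hw1 hw2
    have hsw : star ((star a) ^ (m + 1 + 1) + 1 - a * c) * star w = 1 := by
      rw [← star_mul, hw1, star_one]
    have hstaru : star ((star a) ^ (m + 1 + 1) + 1 - a * c)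
        = a ^ (m + 1 + 1) + 1 - star (a * c) := by
      rw [star_sub, star_add, star_one, star_pow, star_star]
    have hyu : y * star ((star a) ^ (m + 1 + 1) + 1 - a * c) = a ^ (m + 1) := by
      rw [hstaru]
      calc y * (a ^ (m + 1 + 1) + 1 - star (a * c))
          = y * a ^ (m + 1 + 1) + y - y * star (a * c) := by noncomm_ring
        _ = a ^ (m + 1) + y - y := by rw [hyapow m, hyp']
        _ = a ^ (m + 1) := by abel
    calc y = y * 1 := (mul_one y).symm
      _ = y * (star ((star a) ^ (m + 1 + 1) + 1 - a * c) * star w) := by rw [hsw]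
      _ = (y * star ((star a) ^ (m + 1 + 1) + 1 - a * c)) * star w := by rw [← mul_assoc]
      _ = a ^ (m + 1) * star w := by rw [hyu]
end

section
/- Let k ≥ 1 be an integer and let a be an element of a unital *-ring R. Then the following are equivalent: (i) a is core invertible; (ii) a has a {1,3}-inverse and (a*)^k + 1 − a p is invertible for every {1,3}-inverse p of a; (iii) a has a {1,3}-inverse p such that (a*)^k + 1 − a p is invertible. In this case, writing u = (a*)^k + 1 − a p, the core inverse of a equals (u⁻¹)* a^(2k−1) (u⁻¹)* and also equals (u⁻¹)* a^(k−1) u⁻¹ (a^k)*. -/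
/-- `p` is a `{1,3}`-inverse of `a`. -/
def Is13Inverse {R : Type*} [Ring R] [StarRing R] (a p : R) : Prop :=
  a * p * a = a ∧ star (a * p) = a * p

section Aux
variable {R : Type*} [Ring R] [StarRing R]

private lemma core_from_unit (m : ℕ) (a e v : R)
    (hea : e * a = a) (hee : e * e = e) (hse : star e = e)
    (hv1 : v * (a ^ (m + 1) + 1 - e) = 1)
    (hv2 : (a ^ (m + 1) + 1 - e) * v = 1) :
    IsCoreInverse a (v * a ^ m * e) ∧ a ^ (m + 1) * v = e := by
  have heap : ∀ j : ℕ, e * a ^ (j + 1) = a ^ (j + 1) := by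
    intro j
    rw [pow_succ', ← mul_assoc, hea]
  have heU : e * (a ^ (m + 1) + 1 - e) = a ^ (m + 1) := by
    rw [mul_sub, mul_add, mul_one, hee, heap m]; abel
  have hUe : (a ^ (m + 1) + 1 - e) * e = a ^ (m + 1) * e := by
    rw [sub_mul, add_mul, one_mul, hee]; abel
  have hUa : (a ^ (m + 1) + 1 - e) * a = a ^ (m + 1) * a := by
    rw [sub_mul, add_mul, one_mul, hea]; abel
  have s1 : a ^ (m + 1) * v = e := by
    rw [← heU, mul_assoc, hv2, mul_one]
  have s2 : v * (a ^ (m + 1) * e) = e := by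
    rw [← hUe, ← mul_assoc, hv1, one_mul]
  have s5 : v * (a ^ (m + 1) * a) = a := by
    rw [← hUa, ← mul_assoc, hv1, one_mul]
  have s3 : e * v = v + e - 1 := by
    have h := hv2
    rw [sub_mul, add_mul, one_mul, s1] at h
    rw [← h]; abel
  have hav : a * v = v * (a * e) := by
    conv_lhs => rw [← s5]
    rw [← pow_succ, pow_succ']
    rw [mul_assoc, mul_assoc, s1]
  have haea : ∀ j : ℕ, a * e * a ^ j * e = a ^ (j + 1) * e := by
    intro j
    cases j with
    | zero => rw [pow_zero, mul_one, mul_assoc, hee, pow_one]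
    | succ i =>
      calc a * e * a ^ (i+1) * e = a * (e * a ^ (i+1)) * e := by
            rw [mul_assoc a e]
        _ = a * a ^ (i+1) * e := by rw [heap i]
        _ = a ^ (i+1+1) * e := by rw [← pow_succ']
  have heme : e * (a ^ m * e) = a ^ m * e := by
    cases m with
    | zero => rw [pow_zero, one_mul, hee]
    | succ i => rw [← mul_assoc, heap i]
  have hax : a * (v * a ^ m * e) = e := by
    calc a * (v * a ^ m * e)
        = (a * v) * (a ^ m * e) := by noncomm_ring
      _ = (v * (a * e)) * (a ^ m * e) := by rw [hav]
      _ = v * (a * e * a ^ m * e) := by noncomm_ring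
      _ = v * (a ^ (m+1) * e) := by rw [haea m]
      _ = e := s2
  refine ⟨⟨?_, ?_, ?_, ?_, ?_⟩, s1⟩
  · rw [hax, hea]
  · rw [mul_assoc, hax, mul_assoc, hee]
  · rw [hax, hse]
  · calc v * a ^ m * e * a ^ 2
        = v * (a ^ m * (e * a) * a) := by rw [pow_two]; noncomm_ring
      _ = v * (a ^ m * a * a) := by rw [hea]
      _ = v * (a ^ (m+1) * a) := by rw [← pow_succ]
      _ = a := s5
  · calc a * (v * a ^ m * e) ^ 2
        = (a * (v * a ^ m * e)) * (v * a ^ m * e) := by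
          rw [pow_two]; noncomm_ring
      _ = e * (v * a ^ m * e) := by rw [hax]
      _ = (e * v) * (a ^ m * e) := by noncomm_ring
      _ = (v + e - 1) * (a ^ m * e) := by rw [s3]
      _ = v * (a ^ m * e) + e * (a ^ m * e) - a ^ m * e := by noncomm_ring
      _ = v * (a ^ m * e) + a ^ m * e - a ^ m * e := by rw [heme]
      _ = v * a ^ m * e := by rw [← mul_assoc]; abel

end Aux

section Aux2
variable {R : Type*} [Ring R] [StarRing R]

private lemma part3_aux (m : ℕ) (a p w : R) (hp : Is13Inverse a p)
    (hw1 : w * ((star a) ^ (m+1) + 1 - a * p) = 1)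
    (hw2 : ((star a) ^ (m+1) + 1 - a * p) * w = 1) :
    IsCoreInverse a (star w * a ^ (2*m+1) * star w) ∧
      star w * a ^ (2*m+1) * star w = star w * a ^ m * w * star (a ^ (m+1)) := by
  obtain ⟨hpa, hps⟩ := hp
  have hee : (a*p)*(a*p) = a*p := by
    calc (a*p)*(a*p) = (a*p*a)*p := by noncomm_ring
      _ = a*p := by rw [hpa]
  have hstaru : star ((star a) ^ (m+1) + 1 - a*p) = a^(m+1) + 1 - a*p := by
    rw [star_sub, star_add, star_pow, star_star, star_one, hps]
  have hv1 : star w * (a^(m+1) + 1 - a*p) = 1 := by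
    rw [← hstaru, ← star_mul, hw2, star_one]
  have hv2 : (a^(m+1) + 1 - a*p) * star w = 1 := by
    rw [← hstaru, ← star_mul, hw1, star_one]
  obtain ⟨hcore, hs1⟩ := core_from_unit m a (a*p) (star w) hpa hee hps hv1 hv2
  have hxeq : star w * a^(2*m+1) * star w = star w * a^m * (a*p) := by
    rw [show 2*m+1 = m+(m+1) from by omega, pow_add]
    calc star w * (a^m * a^(m+1)) * star w
        = star w * a^m * (a^(m+1) * star w) := by noncomm_ring
      _ = star w * a^m * (a*p) := by rw [hs1]
  have hsae : star a * (a*p) = star a := by rw [← hps, ← star_mul, hpa]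
  have hAe : (star a)^(m+1) * (a*p) = (star a)^(m+1) := by
    rw [pow_succ, mul_assoc, hsae]
  have hue : ((star a)^(m+1) + 1 - a*p) * (a*p) = (star a)^(m+1) := by
    rw [sub_mul, add_mul, one_mul, hee, hAe]; abel
  have hwA : w * (star a)^(m+1) = a*p := by
    rw [← hue, ← mul_assoc, hw1, one_mul]
  refine ⟨by rw [hxeq]; exact hcore, ?_⟩
  calc star w * a^(2*m+1) * star w
      = star w * a^m * (a*p) := hxeq
    _ = star w * a^m * (w * (star a)^(m+1)) := by rw [hwA]
    _ = star w * a^m * w * (star a)^(m+1) := by rw [← mul_assoc]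
    _ = star w * a^m * w * star (a^(m+1)) := by rw [star_pow]

end Aux2

section Aux3
variable {R : Type*} [Ring R] [StarRing R]

private lemma pow_inv_aux (e b b' : R) (h1 : b*b' = e) (heb : e*b' = b') :
    ∀ n : ℕ, b^(n+1) * b'^(n+1) = e := by
  intro n; induction n with
  | zero => simpa using h1
  | succ i ih =>
    rw [pow_succ' b, pow_succ b']
    calc b*b^(i+1)*(b'^(i+1)*b') = b*(b^(i+1)*b'^(i+1))*b' := by noncomm_ring
      _ = b*e*b' := by rw [ih]
      _ = b*b' := by rw [mul_assoc, heb]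
      _ = e := h1

private lemma unit_aux (m : ℕ) (a x p : R) (hx : IsCoreInverse a x)
    (hp : Is13Inverse a p) :
    IsUnit ((star a) ^ (m+1) + 1 - a * p) := by
  obtain ⟨c1, c2, c3, c4, c5⟩ := hx
  obtain ⟨hpa, hps⟩ := hp
  have hee : (a*p)*(a*p) = a*p := by
    calc (a*p)*(a*p) = (a*p*a)*p := by noncomm_ring
      _ = a*p := by rw [hpa]
  have hsae : star a * (a*p) = star a := by rw [← hps, ← star_mul, hpa]
  have hApe : ∀ n : ℕ, (star a)^(n+1) * (a*p) = (star a)^(n+1) := fun n => by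
    rw [pow_succ, mul_assoc, hsae]
  have hx5 : a*(x*x) = x := by rw [← pow_two]; exact c5
  have haex : a*(a*p)*x = a*x := by
    calc a*(a*p)*x = a*(a*p)*(a*(x*x)) := by rw [hx5]
      _ = a*((a*p)*a)*(x*x) := by noncomm_ring
      _ = a*a*(x*x) := by rw [hpa]
      _ = a*(a*(x*x)) := by rw [mul_assoc]
      _ = a*x := by rw [hx5]
  have hxae : x*a*(a*p) = a*p := by
    calc x*a*(a*p) = (x*(a*a))*p := by noncomm_ring
      _ = (x*a^2)*p := by rw [← pow_two]
      _ = a*p := by rw [c4]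
  -- corner facts for b := a*(a*p) and b' := (a*p)*x*(a*p)
  have hbb' : (a*(a*p))*((a*p)*x*(a*p)) = a*p := by
    calc (a*(a*p))*((a*p)*x*(a*p)) = (a*((a*p)*(a*p)))*x*(a*p) := by noncomm_ring
      _ = (a*(a*p))*x*(a*p) := by rw [hee]
      _ = (a*x)*(a*p) := by rw [haex]
      _ = (a*x*a)*p := by noncomm_ring
      _ = a*p := by rw [c1]
  have hb'b : ((a*p)*x*(a*p))*(a*(a*p)) = a*p := by
    calc ((a*p)*x*(a*p))*(a*(a*p)) = (a*p)*x*((a*p)*a)*(a*p) := by noncomm_ring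
      _ = (a*p)*x*a*(a*p) := by rw [hpa]
      _ = (a*p)*(x*a*(a*p)) := by noncomm_ring
      _ = (a*p)*(a*p) := by rw [hxae]
      _ = a*p := hee
  have heb : (a*p)*(a*(a*p)) = a*(a*p) := by
    calc (a*p)*(a*(a*p)) = ((a*p)*a)*(a*p) := by noncomm_ring
      _ = a*(a*p) := by rw [hpa]
  have heb' : (a*p)*((a*p)*x*(a*p)) = (a*p)*x*(a*p) := by
    calc (a*p)*((a*p)*x*(a*p)) = ((a*p)*(a*p))*x*(a*p) := by noncomm_ring
      _ = (a*p)*x*(a*p) := by rw [hee]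
  have hb'e : ((a*p)*x*(a*p))*(a*p) = (a*p)*x*(a*p) := by
    rw [mul_assoc, hee]
  have hKey1 : (a*(a*p))^(m+1) * ((a*p)*x*(a*p))^(m+1) = a*p :=
    pow_inv_aux _ _ _ hbb' heb' m
  have hKey2 : ((a*p)*x*(a*p))^(m+1) * (a*(a*p))^(m+1) = a*p :=
    pow_inv_aux _ _ _ hb'b heb m
  have hb'pow : ∀ n : ℕ, ((a*p)*x*(a*p))^(n+1) * (a*p) = ((a*p)*x*(a*p))^(n+1) :=
    fun n => by rw [pow_succ, mul_assoc, hb'e]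
  have heb'pow : ∀ n : ℕ, (a*p) * ((a*p)*x*(a*p))^(n+1) = ((a*p)*x*(a*p))^(n+1) :=
    fun n => by rw [pow_succ', ← mul_assoc, heb']
  have hsb : star (a*(a*p)) = (a*p)*star a := by rw [star_mul, hps]
  have hCn : ∀ n : ℕ, ((a*p)*star a)^(n+1) = (a*p)*(star a)^(n+1) := by
    intro n; induction n with
    | zero => rw [pow_one, pow_one]
    | succ i ih =>
      calc ((a*p)*star a)^(i+1+1)
          = ((a*p)*star a)^(i+1) * ((a*p)*star a) := by rw [pow_succ]
        _ = ((a*p)*(star a)^(i+1)) * ((a*p)*star a) := by rw [ih]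
        _ = (a*p)*((star a)^(i+1)*(a*p))*star a := by noncomm_ring
        _ = (a*p)*(star a)^(i+1)*star a := by rw [hApe i]
        _ = (a*p)*(star a)^(i+1+1) := by rw [mul_assoc, ← pow_succ]
  have hC : star ((a*(a*p))^(m+1)) = (a*p)*(star a)^(m+1) := by
    rw [star_pow, hsb, hCn m]
  have hCs : ((a*p)*(star a)^(m+1)) * star (((a*p)*x*(a*p))^(m+1)) = a*p := by
    rw [← hC, ← star_mul, hKey2, hps]
  have hsC : star (((a*p)*x*(a*p))^(m+1)) * ((a*p)*(star a)^(m+1)) = a*p := by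
    rw [← hC, ← star_mul, hKey1, hps]
  have hes : (a*p) * star (((a*p)*x*(a*p))^(m+1)) = star (((a*p)*x*(a*p))^(m+1)) := by
    have h := congrArg star (hb'pow m)
    rwa [star_mul, hps] at h
  have hse2 : star (((a*p)*x*(a*p))^(m+1)) * (a*p) = star (((a*p)*x*(a*p))^(m+1)) := by
    have h := congrArg star (heb'pow m)
    rwa [star_mul, hps] at h
  have hsA : star (((a*p)*x*(a*p))^(m+1)) * (star a)^(m+1) = a*p := by
    calc star (((a*p)*x*(a*p))^(m+1)) * (star a)^(m+1)
        = (star (((a*p)*x*(a*p))^(m+1)) * (a*p)) * (star a)^(m+1) := by rw [hse2]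
      _ = star (((a*p)*x*(a*p))^(m+1)) * ((a*p) * (star a)^(m+1)) := by rw [mul_assoc]
      _ = a*p := hsC
  have hApem : (star a)^(m+1)*(a*p) = (star a)^(m+1) := hApe m
  have hqq : (1-a*p)*(1-a*p) = 1-a*p := by
    have h : (1-a*p)*(1-a*p) = 1 - a*p - a*p + (a*p)*(a*p) := by noncomm_ring
    rw [h, hee]; abel
  set A := (star a)^(m+1) with hA
  set S := star (((a*p)*x*(a*p))^(m+1)) with hS
  set q := 1 - a*p with hq
  have hAq : A * q = 0 := by rw [hq, mul_sub, mul_one, hApem, sub_self]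
  have hqs : q * S = 0 := by rw [hq, sub_mul, one_mul, hes, sub_self]
  have hsq : S * q = 0 := by rw [hq, mul_sub, mul_one, hse2, sub_self]
  have hu : A + 1 - a*p = A + q := by rw [hq]; abel
  rw [hu]
  refine isUnit_iff_exists.mpr ⟨S + q - q*(A*S), ?_, ?_⟩
  · have e1 : (A + q)*(S + q - q*(A*S))
        = A*S + A*q - (A*q)*(A*S) + (q*S + (q*q - (q*q)*(A*S))) := by noncomm_ring
    rw [e1, hAq, hqs, hqq]
    simp only [zero_mul, sub_zero, add_zero, zero_add, mul_zero]
    have e2 : q*(A*S) = A*S - (a*p)*(A*S) := by rw [hq, sub_mul, one_mul]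
    have e3 : (a*p)*(A*S) = a*p := by rw [← mul_assoc]; exact hCs
    rw [e2, e3, hq]; abel
  · have f1 : (S + q - q*(A*S))*(A + q)
        = S*A + S*q + (q*A + q*q) - ((q*(A*S))*A + (q*(A*S))*q) := by noncomm_ring
    rw [f1, hsA, hsq, hqq]
    have f2 : (q*(A*S))*A = q*A := by
      calc (q*(A*S))*A = q*(A*(S*A)) := by noncomm_ring
        _ = q*(A*(a*p)) := by rw [hsA]
        _ = q*A := by rw [hApem]
    have f3 : (q*(A*S))*q = 0 := by
      calc (q*(A*S))*q = q*(A*(S*q)) := by noncomm_ring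
        _ = 0 := by rw [hsq, mul_zero, mul_zero]
    rw [f2, f3, hq]; abel

end Aux3

/-- Proposition 4.8: for `k ≥ 1`, `a` is core invertible iff `a` has a
`{1,3}`-inverse and `(a*)^k + 1 - a p` is invertible for every (equivalently,
some) `{1,3}`-inverse `p` of `a`; in that case, with `u = (a*)^k + 1 - a p`,
the core inverse of `a` is `(u⁻¹)* a^(2k-1) (u⁻¹)* = (u⁻¹)* a^(k-1) u⁻¹ (a^k)*`. -/
theorem stmt_8 {R : Type*} [Ring R] [StarRing R] (k : ℕ) (hk : 1 ≤ k) (a : R) :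
    ((∃ x, IsCoreInverse a x) ↔
      (∃ p, Is13Inverse a p) ∧
        ∀ p, Is13Inverse a p → IsUnit ((star a) ^ k + 1 - a * p)) ∧
    ((∃ x, IsCoreInverse a x) ↔
      ∃ p, Is13Inverse a p ∧ IsUnit ((star a) ^ k + 1 - a * p)) ∧
    (∀ p w, Is13Inverse a p →
      w * ((star a) ^ k + 1 - a * p) = 1 → ((star a) ^ k + 1 - a * p) * w = 1 →
      IsCoreInverse a (star w * a ^ (2 * k - 1) * star w) ∧
      star w * a ^ (2 * k - 1) * star w
        = star w * a ^ (k - 1) * w * star (a ^ k)) := by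
  obtain ⟨m, rfl⟩ : ∃ m, k = m + 1 := ⟨k - 1, by omega⟩
  have E1 : 2*(m+1)-1 = 2*m+1 := by omega
  have E2 : (m+1)-1 = m := by omega
  simp only [E1, E2]
  refine ⟨⟨?_, ?_⟩, ⟨?_, ?_⟩, ?_⟩
  · rintro ⟨x, hx⟩
    exact ⟨⟨x, hx.1, hx.2.2.1⟩, fun p hp => unit_aux m a x p hx hp⟩
  · rintro ⟨⟨p, hp⟩, hall⟩
    obtain ⟨w, h1, h2⟩ := isUnit_iff_exists.mp (hall p hp)
    exact ⟨_, (part3_aux m a p w hp h2 h1).1⟩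
  · rintro ⟨x, hx⟩
    exact ⟨x, ⟨hx.1, hx.2.2.1⟩, unit_aux m a x x hx ⟨hx.1, hx.2.2.1⟩⟩
  · rintro ⟨p, hp, hu⟩
    obtain ⟨w, h1, h2⟩ := isUnit_iff_exists.mp hu
    exact ⟨_, (part3_aux m a p w hp h2 h1).1⟩
  · intro p w hp hw1 hw2
    exact part3_aux m a p w hp hw1 hw2
end

section
/- Let k ≥ 2 be an integer, let a be a core invertible element of a unital *-ring R, and let p be a {1,3}-inverse of a such that u = (a*)^k + 1 − a p is invertible. Then the core inverse of a equals a^(k−1) (u⁻¹)*. -/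
/-- Let `k ≥ 2`, let `a` be core invertible with core inverse `y`, and let `p`
be a `{1,3}`-inverse of `a` such that `u = (a*)^k + 1 - a p` is invertible (with
inverse `w`). Then the core inverse of `a` equals `a^(k-1) (u⁻¹)*`. -/
theorem stmt_9 {R : Type*} [Ring R] [StarRing R] (k : ℕ) (hk : 2 ≤ k) (a y p w : R)
    (hy : IsCoreInverse a y) (hp : Is13Inverse a p)
    (hw1 : w * ((star a) ^ k + 1 - a * p) = 1)
    (hw2 : ((star a) ^ k + 1 - a * p) * w = 1) :
    y = a ^ (k - 1) * star w := by
  obtain ⟨h1, h2, h3, h4, h5⟩ := hy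
  obtain ⟨hp1, hp3⟩ := hp
  -- star a * (a * p) = star a
  have ha : star a * (a * p) = star a := by
    calc star a * (a * p) = star a * star (a * p) := by rw [hp3]
    _ = star (a * p * a) := by rw [← star_mul]
    _ = star a := by rw [hp1]
  have h6 : y = y * star y * star a := by
    calc y = y * a * y := h2.symm
    _ = y * (a * y) := by rw [mul_assoc]
    _ = y * star (a * y) := by rw [h3]
    _ = y * (star y * star a) := by rw [star_mul]
    _ = y * star y * star a := by rw [mul_assoc]
  have key : y * (a * p) = y := by
    calc y * (a * p) = y * star y * star a * (a * p) := by rw [← h6]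
    _ = y * star y * (star a * (a * p)) := by rw [mul_assoc]
    _ = y * star y * star a := by rw [ha]
    _ = y := h6.symm
  have hyak : y * a ^ k = a ^ (k - 1) := by
    obtain ⟨m, rfl⟩ : ∃ m, k = m + 2 := ⟨k - 2, by omega⟩
    have : y * a ^ (m + 2) = y * a ^ 2 * a ^ m := by
      rw [show m + 2 = 2 + m from by omega, mul_assoc, ← pow_add]
    rw [this, h4]
    rw [show m + 2 - 1 = m + 1 from rfl, pow_succ']
  have hu : star ((star a) ^ k + 1 - a * p) = a ^ k + 1 - a * p := by
    simp [star_sub, star_add, star_pow, hp3]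
  have h8 : (a ^ k + 1 - a * p) * star w = 1 := by
    have := congrArg star hw1
    rw [star_mul, hu, star_one] at this
    exact this
  calc y = y * ((a ^ k + 1 - a * p) * star w) := by rw [h8, mul_one]
  _ = (y * a ^ k + y - y * (a * p)) * star w := by noncomm_ring
  _ = a ^ (k - 1) * star w := by rw [hyak, key, add_sub_cancel_right]
end

section
/- Let a be a core invertible element of a unital *-ring R with core inverse c, let a⁻ be an inner inverse of a, and suppose u = a* + 1 − a a⁻ is invertible. Then c = (u⁻¹)* a (u⁻¹)* if and only if a⁻ is a {1,3}-inverse of a (i.e., (a a⁻)* = a a⁻). -/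
/-- Let `a` be core invertible with core inverse `y`, let `c` be an inner
inverse of `a` and suppose `u = a* + 1 - a c` is invertible with inverse `w`.
Then `y = (u⁻¹)* a (u⁻¹)*` if and only if `c` is a `{1,3}`-inverse of `a`,
i.e. `(a c)* = a c`. -/
theorem stmt_10 {R : Type*} [Ring R] [StarRing R] (a y c w : R)
    (hy : IsCoreInverse a y) (hc : a * c * a = a)
    (hw1 : w * (star a + 1 - a * c) = 1)
    (hw2 : (star a + 1 - a * c) * w = 1) :
    y = star w * a * star w ↔ star (a * c) = a * c := by
  obtain ⟨h1, h2, h3, h4, h5⟩ := hy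
  rw [pow_two] at h4
  rw [pow_two] at h5
  set s : R := star (a * c) with hsdef
  have hsu : star (star a + 1 - a * c) = a + 1 - s := by
    simp [hsdef, star_sub, star_add]
  have hwv : star w * (a + 1 - s) = 1 := by
    have := congrArg star hw2
    rw [star_mul, hsu, star_one] at this
    exact this
  have hvw : (a + 1 - s) * star w = 1 := by
    have := congrArg star hw1
    rw [star_mul, hsu, star_one] at this
    exact this
  have hss : s * s = s := by
    have h : (a * c) * (a * c) = a * c := by
      calc (a * c) * (a * c) = (a * c * a) * c := by noncomm_ring
        _ = a * c := by rw [hc]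
    have := congrArg star h
    rwa [star_mul, ← hsdef] at this
  have hps : a * y * s = a * y := by
    have h : (a * c) * (a * y) = a * y := by
      calc (a * c) * (a * y) = (a * c * a) * y := by noncomm_ring
        _ = a * y := by rw [hc]
    have := congrArg star h
    rwa [star_mul, ← hsdef, h3] at this
  have hstar_a : star a * (a * y) = star a := by
    have := congrArg star h1
    rwa [star_mul (a * y) a, h3] at this
  have hsp : s * (a * y) = s := by
    calc s * (a * y) = star c * (star a * (a * y)) := by
          rw [hsdef, star_mul]; noncomm_ring
      _ = star c * star a := by rw [hstar_a]
      _ = s := by rw [hsdef, star_mul]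
  constructor
  · intro hyw
    have hvyv : (a + 1 - s) * y * (a + 1 - s) = a := by
      calc (a + 1 - s) * y * (a + 1 - s)
          = ((a + 1 - s) * star w) * a * (star w * (a + 1 - s)) := by
            rw [hyw]; noncomm_ring
        _ = a := by rw [hvw, hwv]; noncomm_ring
    have hX : y * a + y - y * s - s * (y * a) - s * y + s * (y * s) = 0 := by
      linear_combination (norm := noncomm_ring) hvyv - h1 + hps
    have hXp : a * y + y - y * s - s - s * y + s * (y * s) = 0 := by
      have h := congrArg (· * (a * y)) hX
      simp only [zero_mul] at h
      linear_combination (norm := noncomm_ring)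
        h - h4 * y - h2 + y * hsp + s * h4 * y + hsp + s * h2 - s * y * hsp
    have h5' : s * (y * a) = y * a + s - a * y := by
      linear_combination (norm := noncomm_ring) hXp - hX
    have h6' : y * a * s = s * (y * a * s) := by
      have h := congrArg (· * s) hX
      simp only [zero_mul] at h
      linear_combination (norm := noncomm_ring) h + y * hss - s * y * hss
    have hkey : s = a * y := by
      have h8 : s * (y * a * s) = y * a * s + s - a * y := by
        calc s * (y * a * s) = (s * (y * a)) * s := by noncomm_ring
          _ = (y * a + s - a * y) * s := by rw [h5']
          _ = (y * a) * s + s * s - a * y * s := by noncomm_ring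
          _ = y * a * s + s - a * y := by rw [hss, hps]
      have h7 := h6'.trans h8
      linear_combination (norm := noncomm_ring) - h7
    show s = a * c
    calc s = a * y := hkey
      _ = star (a * y) := h3.symm
      _ = star s := by rw [hkey]
      _ = a * c := by rw [hsdef, star_star]
  · intro hs
    have hac : a * y = a * c := by
      calc a * y = star (a * y) := h3.symm
        _ = star ((a * c * a) * y) := by rw [hc]
        _ = star ((a * c) * (a * y)) := by rw [mul_assoc (a * c) a y]
        _ = star (a * y) * star (a * c) := by rw [star_mul]
        _ = (a * y) * (a * c) := by rw [h3, ← hsdef, hs]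
        _ = (a * y * a) * c := by noncomm_ring
        _ = a * c := by rw [h1]
    have hsac : s = a * y := hs.trans hac.symm
    have e2 : a * y * (a * y) = a * y := by
      calc a * y * (a * y) = (a * y * a) * y := by noncomm_ring
        _ = a * y := by rw [h1]
    have e1 : (a + 1 - a * y) * y = a * y := by
      calc (a + 1 - a * y) * y = a * y + y - a * (y * y) := by noncomm_ring
        _ = a * y + y - y := by rw [h5]
        _ = a * y := by noncomm_ring
    have hvyv : (a + 1 - s) * y * (a + 1 - s) = a := by
      rw [hsac]
      calc (a + 1 - a * y) * y * (a + 1 - a * y)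
          = ((a + 1 - a * y) * y) * (a + 1 - a * y) := by noncomm_ring
        _ = (a * y) * (a + 1 - a * y) := by rw [e1]
        _ = a * y * a + a * y - a * y * (a * y) := by noncomm_ring
        _ = a + a * y - a * y := by rw [h1, e2]
        _ = a := by noncomm_ring
    calc y = (star w * (a + 1 - s)) * y * ((a + 1 - s) * star w) := by
          rw [hwv, hvw]; noncomm_ring
      _ = star w * ((a + 1 - s) * y * (a + 1 - s)) * star w := by noncomm_ring
      _ = star w * a * star w := by rw [hvyv]
end

section
/- Let R be a Dedekind-finite unital *-ring and let a ∈ R. Then the following are equivalent: (i) a is core invertible; (ii) a has a {1,3}-inverse and a* a + 1 − a p is invertible for every {1,3}-inverse p of a; (iii) a has a {1,3}-inverse p such that a* a + 1 − a p is invertible. In this case, writing v = a* a + 1 − a p, the core inverse of a equals v⁻¹ a*. -/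
section Aux

variable {R : Type*} [Ring R] [StarRing R]

private lemma core_of_inv (hDF : ∀ x y : R, x * y = 1 → y * x = 1) (a p w : R)
    (hp : Is13Inverse a p)
    (h1 : w * (star a * a + 1 - a * p) = 1)
    (h2 : (star a * a + 1 - a * p) * w = 1) :
    IsCoreInverse a (w * star a) := by
  obtain ⟨hp1, hp3⟩ := hp
  have hee : a * p * (a * p) = a * p := by rw [← mul_assoc, hp1]
  have hae : star a * (a * p) = star a := by
    have h := congrArg star hp1
    rw [star_mul, hp3] at h
    exact h
  set e := a * p with he
  have hfa : (1 - e) * a = 0 := by rw [sub_mul, one_mul, hp1, sub_self]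
  have hsaf : star a * (1 - e) = 0 := by rw [mul_sub, mul_one, hae, sub_self]
  have hef : e * (1 - e) = 0 := by rw [mul_sub, mul_one, hee, sub_self]
  have hff : (1 - e) * (1 - e) = 1 - e := by rw [sub_mul, one_mul, hef, sub_zero]
  have hsv : star (star a * a + 1 - e) = star a * a + 1 - e := by
    rw [star_sub, star_add, star_mul, star_star, star_one, hp3]
  have hsw : star w = w := by
    have h1' := congrArg star h1
    rw [star_mul, star_one, hsv] at h1'
    calc star w = 1 * star w := (one_mul _).symm
      _ = w * (star a * a + 1 - e) * star w := by rw [h1]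
      _ = w * ((star a * a + 1 - e) * star w) := by rw [mul_assoc]
      _ = w := by rw [h1', mul_one]
  have key : (star a + (1 - e)) * (a + (1 - e)) = star a * a + 1 - e := by
    rw [add_mul, mul_add, mul_add, hsaf, hfa, hff, add_zero, zero_add, ← add_sub_assoc]
  have hcu : w * (star a + (1 - e)) * (a + (1 - e)) = 1 := by
    rw [mul_assoc, key, h1]
  have huc : (a + (1 - e)) * (w * (star a + (1 - e))) = 1 := hDF _ _ hcu
  have heu : e * (a + (1 - e)) = a := by rw [mul_add, hp1, hef, add_zero]
  have hfu : (1 - e) * (a + (1 - e)) = 1 - e := by rw [mul_add, hfa, hff, zero_add]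
  have hac : a * (w * star a) + a * (w * (1 - e)) = e := by
    have h : a * (w * (star a + (1 - e))) = e := by
      calc a * (w * (star a + (1 - e)))
          = e * (a + (1 - e)) * (w * (star a + (1 - e))) := by rw [heu]
        _ = e * ((a + (1 - e)) * (w * (star a + (1 - e)))) := by rw [mul_assoc]
        _ = e := by rw [huc, mul_one]
    rw [mul_add, mul_add] at h
    exact h
  have hfc : (1 - e) * (w * star a) + (1 - e) * (w * (1 - e)) = 1 - e := by
    have h : (1 - e) * (w * (star a + (1 - e))) = 1 - e := by
      calc (1 - e) * (w * (star a + (1 - e)))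
          = (1 - e) * (a + (1 - e)) * (w * (star a + (1 - e))) := by rw [hfu]
        _ = (1 - e) * ((a + (1 - e)) * (w * (star a + (1 - e)))) := by rw [mul_assoc]
        _ = 1 - e := by rw [huc, mul_one]
    rw [mul_add, mul_add] at h
    exact h
  have hS : (1 - e) * (w * star a) = 1 - e - (1 - e) * (w * (1 - e)) :=
    eq_sub_of_add_eq hfc
  have h' := congrArg star hS
  simp only [star_sub, star_one, star_mul, star_star, hp3, hsw, mul_assoc] at h'
  -- h' : a * (w * (1 - e)) = 1 - e - (1 - e) * (w * (1 - e))
  have h0 : (1 - e) * (a * (w * (1 - e))) = 0 := by rw [← mul_assoc, hfa, zero_mul]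
  rw [h', mul_sub, hff, ← mul_assoc, hff] at h0
  have hsz : a * (w * (1 - e)) = 0 := by rw [h']; exact h0
  have hSz : (1 - e) * (w * star a) = 0 := by rw [hS]; exact h0
  have hax : a * (w * star a) = e := by
    rw [hsz, add_zero] at hac; exact hac
  have hone : e + (1 - e) = 1 := by abel
  have hex : e * (w * star a) = w * star a := by
    have h1e : e * (w * star a) + (1 - e) * (w * star a) = w * star a := by
      rw [← add_mul, hone, one_mul]
    rw [hSz, add_zero] at h1e
    exact h1e
  have hxe : w * star a * e = w * star a := by rw [mul_assoc, hae]
  have hva : (star a * a + 1 - e) * a = star a * (a * a) := by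
    rw [sub_mul, add_mul, one_mul, hp1, add_sub_cancel_right, mul_assoc]
  refine ⟨?_, ?_, ?_, ?_, ?_⟩
  · rw [hax]; exact hp1
  · rw [mul_assoc, hax]; exact hxe
  · rw [hax]; exact hp3
  · rw [pow_two, mul_assoc, ← hva, ← mul_assoc, h1, one_mul]
  · rw [pow_two, ← mul_assoc, hax]; exact hex

private lemma unit_of_core (hDF : ∀ x y : R, x * y = 1 → y * x = 1) (a x p : R)
    (hx : IsCoreInverse a x) (hp : Is13Inverse a p) :
    IsUnit (star a * a + 1 - a * p) := by
  obtain ⟨hx1, hx2, hx3, hx4, hx5⟩ := hx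
  obtain ⟨hp1, hp3⟩ := hp
  have hee : a * p * (a * p) = a * p := by rw [← mul_assoc, hp1]
  have hae : star a * (a * p) = star a := by
    have h := congrArg star hp1
    rw [star_mul, hp3] at h
    exact h
  have hx4' : x * a * a = a := by rw [mul_assoc, ← pow_two]; exact hx4
  have hxae : x * (a * (a * p)) = a * p := by
    rw [← mul_assoc, ← mul_assoc, hx4']
  set e := a * p with he
  have hfa : (1 - e) * a = 0 := by rw [sub_mul, one_mul, hp1, sub_self]
  have hsaf : star a * (1 - e) = 0 := by rw [mul_sub, mul_one, hae, sub_self]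
  have hef : e * (1 - e) = 0 := by rw [mul_sub, mul_one, hee, sub_self]
  have hff : (1 - e) * (1 - e) = 1 - e := by rw [sub_mul, one_mul, hef, sub_zero]
  have hsf : star (1 - e) = 1 - e := by rw [star_sub, star_one, hp3]
  have hxaf : x * (a * (1 - e)) = x * a - e := by
    rw [mul_sub, mul_one, mul_sub, hxae]
  have hkey : (1 - x * a) * (1 - e) = 1 - x * a := by
    rw [sub_mul, one_mul, mul_assoc, hxaf]
    abel
  have t1 : x * e * (a + (1 - e)) = x * a := by
    rw [mul_add, mul_assoc, hp1, mul_assoc, hef, mul_zero, add_zero]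
  have t2 : (1 - x * a) * (1 - e) * (a + (1 - e)) = 1 - x * a := by
    rw [mul_add, mul_assoc, hfa, mul_zero, zero_add, mul_assoc, hff, hkey]
  have hcu : (x * e + (1 - x * a) * (1 - e)) * (a + (1 - e)) = 1 := by
    rw [add_mul, t1, t2]
    abel
  have huc : (a + (1 - e)) * (x * e + (1 - x * a) * (1 - e)) = 1 := hDF _ _ hcu
  have hU : IsUnit (a + (1 - e)) :=
    ⟨⟨a + (1 - e), x * e + (1 - x * a) * (1 - e), huc, hcu⟩, rfl⟩
  have hUs : IsUnit (star a + (1 - e)) := by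
    have h := hU.star
    rwa [star_add, hsf] at h
  have key : (star a + (1 - e)) * (a + (1 - e)) = star a * a + 1 - e := by
    rw [add_mul, mul_add, mul_add, hsaf, hfa, hff, add_zero, zero_add, ← add_sub_assoc]
  rw [← key]
  exact hUs.mul hU

end Aux

/-- Let `R` be a Dedekind-finite unital `*`-ring and `a ∈ R`. Then `a` is core
invertible iff `a` has a `{1,3}`-inverse and `a* a + 1 - a p` is invertible for
every (equivalently, some) `{1,3}`-inverse `p` of `a`; in that case, with
`v = a* a + 1 - a p`, the core inverse of `a` equals `v⁻¹ a*`. -/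
theorem stmt_11 {R : Type*} [Ring R] [StarRing R]
    (hDF : ∀ x y : R, x * y = 1 → y * x = 1) (a : R) :
    ((∃ x, IsCoreInverse a x) ↔
      (∃ p, Is13Inverse a p) ∧
        ∀ p, Is13Inverse a p → IsUnit (star a * a + 1 - a * p)) ∧
    ((∃ x, IsCoreInverse a x) ↔
      ∃ p, Is13Inverse a p ∧ IsUnit (star a * a + 1 - a * p)) ∧
    (∀ p w, Is13Inverse a p →
      w * (star a * a + 1 - a * p) = 1 → (star a * a + 1 - a * p) * w = 1 →
      IsCoreInverse a (w * star a)) := by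
  have back : (∃ p, Is13Inverse a p ∧ IsUnit (star a * a + 1 - a * p)) →
      ∃ x, IsCoreInverse a x := by
    rintro ⟨p, hp, hu⟩
    obtain ⟨U, hU⟩ := hu
    refine ⟨((U⁻¹ : Rˣ) : R) * star a, core_of_inv hDF a p _ hp ?_ ?_⟩
    · rw [← hU]; exact U.inv_mul
    · rw [← hU]; exact U.mul_inv
  refine ⟨⟨?_, ?_⟩, ⟨?_, ?_⟩, ?_⟩
  · rintro ⟨x, hx⟩
    exact ⟨⟨x, hx.1, hx.2.2.1⟩, fun p hp => unit_of_core hDF a x p hx hp⟩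
  · rintro ⟨⟨p, hp⟩, hall⟩
    exact back ⟨p, hp, hall p hp⟩
  · rintro ⟨x, hx⟩
    exact ⟨x, ⟨hx.1, hx.2.2.1⟩, unit_of_core hDF a x x hx ⟨hx.1, hx.2.2.1⟩⟩
  · exact back
  · exact fun p w hp h1 h2 => core_of_inv hDF a p w hp h1 h2
end

section
/- Let a be an element of a unital *-ring R with inner inverse a⁻. Then the following are equivalent: (i) a is Moore-Penrose invertible; (ii) a a* + 1 − a a⁻ is right invertible; (iii) a* a + 1 − a⁻ a is right invertible; (iv) a a* a a⁻ + 1 − a a⁻ is right invertible; (v) a⁻ a a* a + 1 − a⁻ a is right invertible; (vi) a a* + 1 − a a⁻ is left invertible; (vii) a* a + 1 − a⁻ a is left invertible; (viii) a a* a a⁻ + 1 − a a⁻ is left invertible; (ix) a⁻ a a* a + 1 − a⁻ a is left invertible. -/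
/-- `x` is a Moore-Penrose inverse of `a`. -/
def IsMPInverse {R : Type*} [Ring R] [StarRing R] (a x : R) : Prop :=
  a * x * a = a ∧ x * a * x = x ∧ star (a * x) = a * x ∧ star (x * a) = x * a

section Aux
variable {R : Type*} [Ring R] [StarRing R]

lemma mp_star {a x : R} (h : IsMPInverse a x) : IsMPInverse (star a) (star x) := by
  obtain ⟨h1, h2, h3, h4⟩ := h
  refine ⟨?_, ?_, ?_, ?_⟩
  · simpa [star_mul, mul_assoc] using congrArg star h1
  · simpa [star_mul, mul_assoc] using congrArg star h2
  · rw [← star_mul, star_star]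
    exact h4.symm
  · rw [← star_mul, star_star]
    exact h3.symm

/-- Core: if `h` is a symmetric idempotent with `a * h = a` and `h = star a * (a * m)`,
then `a` is Moore-Penrose invertible. -/
lemma lemB (a h m : R) (hsym : star h = h) (hidem : h * h = h) (hah : a * h = a)
    (hm : star a * (a * m) = h) : ∃ x, IsMPInverse a x := by
  have f_ah : ∀ z : R, a * (h * z) = a * z := by
    intro z; rw [← mul_assoc, hah]
  have f_hh : ∀ z : R, h * (h * z) = h * z := by
    intro z; rw [← mul_assoc, hidem]
  have hm' : star a * a * m = h := by rw [mul_assoc]; exact hm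
  have f_m : ∀ z : R, star a * (a * (m * z)) = h * z := by
    intro z; rw [← mul_assoc, ← mul_assoc, hm']
  set w : R := star a * a + 1 - h with hw_def
  set v : R := h * (m * h) + 1 - h with hv_def
  have wv : w * v = 1 := by
    rw [hw_def, hv_def]
    simp only [mul_add, mul_sub, add_mul, sub_mul, mul_one, one_mul, mul_assoc,
      f_ah, f_hh, f_m, hah, hidem, hm]
    abel
  have hsw : star w = w := by
    rw [hw_def]
    simp [star_sub, star_add, star_mul, star_star, star_one, hsym]
  have svw : star v * w = 1 := by
    have := congrArg star wv
    rw [star_mul, hsw, star_one] at this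
    exact this
  have veq : star v = v := by
    calc star v = star v * (w * v) := by rw [wv, mul_one]
      _ = (star v * w) * v := by rw [mul_assoc]
      _ = v := by rw [svw, one_mul]
  have vw : v * w = 1 := by rw [← veq]; exact svw
  have wh : w * h = star a * a := by
    rw [hw_def]
    simp only [add_mul, sub_mul, one_mul, mul_assoc, hah, hidem]
    abel
  have hv : h = v * (star a * a) := by
    calc h = (v * w) * h := by rw [vw, one_mul]
      _ = v * (w * h) := by rw [mul_assoc]
      _ = v * (star a * a) := by rw [wh]
  have zaa : a * (v * (star a * a)) = a := by rw [← hv, hah]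
  -- the MP inverse
  refine ⟨h * (v * star a), ?_, ?_, ?_, ?_⟩
  · -- a * x * a = a
    calc a * (h * (v * star a)) * a = a * (v * (star a * a)) := by
          rw [← mul_assoc, hah]; simp only [mul_assoc]
      _ = a := zaa
  · -- x * a * x = x
    have xa : (h * (v * star a)) * a = h := by
      calc (h * (v * star a)) * a = h * (v * (star a * a)) := by simp only [mul_assoc]
        _ = h * h := by rw [← hv]
        _ = h := hidem
    rw [xa, ← mul_assoc, hidem]
  · -- star (a * x) = a * x
    have ax : a * (h * (v * star a)) = a * (v * star a) := by rw [← mul_assoc, hah]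
    rw [ax]
    calc star (a * (v * star a)) = a * (star v * star a) := by
          simp [star_mul, star_star, mul_assoc]
      _ = a * (v * star a) := by rw [veq]
  · -- star (x * a) = x * a
    have xa : (h * (v * star a)) * a = h := by
      calc (h * (v * star a)) * a = h * (v * (star a * a)) := by simp only [mul_assoc]
        _ = h * h := by rw [← hv]
        _ = h := hidem
    rw [xa]; exact hsym

lemma lemA (a t m : R) (h1 : a * (star a * t) = a) (h2 : star a * t = star a * (a * m)) :
    ∃ x, IsMPInverse a x := by
  have e1 : (star t * a) * star a = star a := by
    simpa [star_mul, star_star, mul_assoc] using congrArg star h1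
  have e2 : star t * a = star a * t := by
    calc star t * a = star t * (a * (star a * t)) := by rw [h1]
      _ = ((star t * a) * star a) * t := by simp only [mul_assoc]
      _ = star a * t := by rw [e1]
  have hsym : star (star a * t) = star a * t := by
    rw [star_mul, star_star]; exact e2
  have hidem : (star a * t) * (star a * t) = star a * t := by
    calc (star a * t) * (star a * t) = (star t * a) * (star a * t) := by rw [e2]
      _ = star t * (a * (star a * t)) := by simp only [mul_assoc]
      _ = star t * a := by rw [h1]
      _ = star a * t := e2
  exact lemB a (star a * t) m hsym hidem h1 h2.symm

end Aux
set_option linter.unusedSectionVars false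
section Fwd
variable {R : Type*} [Ring R] [StarRing R] {a c x : R}

-- toolkit, assuming hc : a * c * a = a and hx : IsMPInverse a x
lemma t_aca (hc : a * c * a = a) : ∀ z : R, a * (c * (a * z)) = a * z := by
  intro z; rw [← mul_assoc, ← mul_assoc, hc]
lemma t_aca0 (hc : a * c * a = a) : a * (c * a) = a := by rw [← mul_assoc, hc]
lemma t_axa (h1 : a * x * a = a) : ∀ z : R, a * (x * (a * z)) = a * z := by
  intro z; rw [← mul_assoc, ← mul_assoc, h1]
lemma t_axa0 (h1 : a * x * a = a) : a * (x * a) = a := by rw [← mul_assoc, h1]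
lemma t_xax (h2 : x * a * x = x) : ∀ z : R, x * (a * (x * z)) = x * z := by
  intro z; rw [← mul_assoc, ← mul_assoc, h2]
lemma t_xax0 (h2 : x * a * x = x) : x * (a * x) = x := by rw [← mul_assoc, h2]
lemma t_ss10 (h4 : star (x * a) = x * a) : star a * star x = x * a := by
  rw [← star_mul]; exact h4
lemma t_ss1 (h4 : star (x * a) = x * a) : ∀ z : R, star a * (star x * z) = x * (a * z) := by
  intro z; rw [← mul_assoc, t_ss10 h4, mul_assoc]
lemma t_ss20 (h3 : star (a * x) = a * x) : star x * star a = a * x := by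
  rw [← star_mul]; exact h3
lemma t_ss2 (h3 : star (a * x) = a * x) : ∀ z : R, star x * (star a * z) = a * (x * z) := by
  intro z; rw [← mul_assoc, t_ss20 h3, mul_assoc]
lemma t_sax0 (h1 : a * x * a = a) (h3 : star (a * x) = a * x) :
    star a * (a * x) = star a := by
  rw [← h3, ← star_mul]
  exact congrArg star h1
lemma t_sax (h1 : a * x * a = a) (h3 : star (a * x) = a * x) :
    ∀ z : R, star a * (a * (x * z)) = star a * z := by
  intro z; rw [← mul_assoc, ← mul_assoc, mul_assoc (star a) a x, t_sax0 h1 h3]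
lemma t_sxa0 (h2 : x * a * x = x) (h4 : star (x * a) = x * a) :
    star x * (x * a) = star x := by
  rw [← h4, ← star_mul]
  exact congrArg star h2
lemma t_sxa (h2 : x * a * x = x) (h4 : star (x * a) = x * a) :
    ∀ z : R, star x * (x * (a * z)) = star x * z := by
  intro z; rw [← mul_assoc, ← mul_assoc, mul_assoc (star x) x a, t_sxa0 h2 h4]
lemma t_axs0 (h2 : x * a * x = x) (h3 : star (a * x) = a * x) :
    a * (x * star x) = star x := by
  rw [← mul_assoc, ← h3, ← star_mul]
  exact congrArg star (t_xax0 h2)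
lemma t_axs (h2 : x * a * x = x) (h3 : star (a * x) = a * x) :
    ∀ z : R, a * (x * (star x * z)) = star x * z := by
  intro z; rw [← mul_assoc, ← mul_assoc, mul_assoc a x (star x), t_axs0 h2 h3]
lemma t_xas0 (h1 : a * x * a = a) (h4 : star (x * a) = x * a) :
    x * (a * star a) = star a := by
  rw [← mul_assoc, ← h4, ← star_mul]
  exact congrArg star (t_axa0 h1)
lemma t_xas (h1 : a * x * a = a) (h4 : star (x * a) = x * a) :
    ∀ z : R, x * (a * (star a * z)) = star a * z := by
  intro z; rw [← mul_assoc, ← mul_assoc, mul_assoc x a (star a), t_xas0 h1 h4]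
lemma t_acs0 (hc : a * c * a = a) (h2 : x * a * x = x) (h3 : star (a * x) = a * x) :
    a * (c * star x) = star x := by
  rw [← t_axs0 h2 h3, t_aca hc]
lemma t_acs (hc : a * c * a = a) (h2 : x * a * x = x) (h3 : star (a * x) = a * x) :
    ∀ z : R, a * (c * (star x * z)) = star x * z := by
  intro z; rw [← mul_assoc, ← mul_assoc, mul_assoc a c (star x), t_acs0 hc h2 h3]
lemma t_sca0 (hc : a * c * a = a) (h2 : x * a * x = x) (h4 : star (x * a) = x * a) :
    star x * (c * a) = star x := by
  calc star x * (c * a) = star x * (x * (a * (c * a))) := (t_sxa h2 h4 (c * a)).symm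
    _ = star x * (x * a) := by rw [t_aca0 hc]
    _ = star x := t_sxa0 h2 h4
lemma t_sca (hc : a * c * a = a) (h2 : x * a * x = x) (h4 : star (x * a) = x * a) :
    ∀ z : R, star x * (c * (a * z)) = star x * z := by
  intro z
  calc star x * (c * (a * z)) = star x * (x * (a * (c * (a * z)))) :=
        (t_sxa h2 h4 (c * (a * z))).symm
    _ = star x * (x * (a * z)) := by rw [t_aca hc]
    _ = star x * z := t_sxa h2 h4 z

end Fwd
section Fwd2
variable {R : Type*} [Ring R] [StarRing R] {a c x : R}

lemma fwd_M_r    (hc : a * c * a = a) (hx : IsMPInverse a x) :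
    (a * star a + 1 - a * c) * (star x * c + 1 - a * x) = 1 := by
  obtain ⟨h1, h2, h3, h4⟩ := hx
  simp only [mul_add, mul_sub, add_mul, sub_mul, mul_one, one_mul, mul_assoc,
    t_aca hc, t_aca0 hc, t_axa h1, t_axa0 h1, t_xax h2, t_xax0 h2,
    t_ss1 h4, t_ss10 h4, t_ss2 h3, t_ss20 h3, t_sax h1 h3, t_sax0 h1 h3,
    t_sxa h2 h4, t_sxa0 h2 h4, t_axs h2 h3, t_axs0 h2 h3, t_xas h1 h4, t_xas0 h1 h4,
    t_acs hc h2 h3, t_acs0 hc h2 h3, t_sca hc h2 h4, t_sca0 hc h2 h4]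
  abel

lemma fwd_M_l    (hc : a * c * a = a) (hx : IsMPInverse a x) :
    (star x * c + 1 - a * x) * (a * star a + 1 - a * c) = 1 := by
  obtain ⟨h1, h2, h3, h4⟩ := hx
  simp only [mul_add, mul_sub, add_mul, sub_mul, mul_one, one_mul, mul_assoc,
    t_aca hc, t_aca0 hc, t_axa h1, t_axa0 h1, t_xax h2, t_xax0 h2,
    t_ss1 h4, t_ss10 h4, t_ss2 h3, t_ss20 h3, t_sax h1 h3, t_sax0 h1 h3,
    t_sxa h2 h4, t_sxa0 h2 h4, t_axs h2 h3, t_axs0 h2 h3, t_xas h1 h4, t_xas0 h1 h4,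
    t_acs hc h2 h3, t_acs0 hc h2 h3, t_sca hc h2 h4, t_sca0 hc h2 h4]
  abel

lemma fwd_M'_r    (hc : a * c * a = a) (hx : IsMPInverse a x) :
    (star a * a + 1 - c * a) * (c * a * (x * star x) + 1 - x * a) = 1 := by
  obtain ⟨h1, h2, h3, h4⟩ := hx
  simp only [mul_add, mul_sub, add_mul, sub_mul, mul_one, one_mul, mul_assoc,
    t_aca hc, t_aca0 hc, t_axa h1, t_axa0 h1, t_xax h2, t_xax0 h2,
    t_ss1 h4, t_ss10 h4, t_ss2 h3, t_ss20 h3, t_sax h1 h3, t_sax0 h1 h3,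
    t_sxa h2 h4, t_sxa0 h2 h4, t_axs h2 h3, t_axs0 h2 h3, t_xas h1 h4, t_xas0 h1 h4,
    t_acs hc h2 h3, t_acs0 hc h2 h3, t_sca hc h2 h4, t_sca0 hc h2 h4]
  abel

lemma fwd_M'_l    (hc : a * c * a = a) (hx : IsMPInverse a x) :
    (c * a * (x * star x) + 1 - x * a) * (star a * a + 1 - c * a) = 1 := by
  obtain ⟨h1, h2, h3, h4⟩ := hx
  simp only [mul_add, mul_sub, add_mul, sub_mul, mul_one, one_mul, mul_assoc,
    t_aca hc, t_aca0 hc, t_axa h1, t_axa0 h1, t_xax h2, t_xax0 h2,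
    t_ss1 h4, t_ss10 h4, t_ss2 h3, t_ss20 h3, t_sax h1 h3, t_sax0 h1 h3,
    t_sxa h2 h4, t_sxa0 h2 h4, t_axs h2 h3, t_axs0 h2 h3, t_xas h1 h4, t_xas0 h1 h4,
    t_acs hc h2 h3, t_acs0 hc h2 h3, t_sca hc h2 h4, t_sca0 hc h2 h4]
  abel

lemma fwd_K_r    (hc : a * c * a = a) (hx : IsMPInverse a x) :
    (a * star a * a * c + 1 - a * c) * (star x * c + 1 - a * c) = 1 := by
  obtain ⟨h1, h2, h3, h4⟩ := hx
  simp only [mul_add, mul_sub, add_mul, sub_mul, mul_one, one_mul, mul_assoc,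
    t_aca hc, t_aca0 hc, t_axa h1, t_axa0 h1, t_xax h2, t_xax0 h2,
    t_ss1 h4, t_ss10 h4, t_ss2 h3, t_ss20 h3, t_sax h1 h3, t_sax0 h1 h3,
    t_sxa h2 h4, t_sxa0 h2 h4, t_axs h2 h3, t_axs0 h2 h3, t_xas h1 h4, t_xas0 h1 h4,
    t_acs hc h2 h3, t_acs0 hc h2 h3, t_sca hc h2 h4, t_sca0 hc h2 h4]
  abel

lemma fwd_K_l    (hc : a * c * a = a) (hx : IsMPInverse a x) :
    (star x * c + 1 - a * c) * (a * star a * a * c + 1 - a * c) = 1 := by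
  obtain ⟨h1, h2, h3, h4⟩ := hx
  simp only [mul_add, mul_sub, add_mul, sub_mul, mul_one, one_mul, mul_assoc,
    t_aca hc, t_aca0 hc, t_axa h1, t_axa0 h1, t_xax h2, t_xax0 h2,
    t_ss1 h4, t_ss10 h4, t_ss2 h3, t_ss20 h3, t_sax h1 h3, t_sax0 h1 h3,
    t_sxa h2 h4, t_sxa0 h2 h4, t_axs h2 h3, t_axs0 h2 h3, t_xas h1 h4, t_xas0 h1 h4,
    t_acs hc h2 h3, t_acs0 hc h2 h3, t_sca hc h2 h4, t_sca0 hc h2 h4]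
  abel

lemma fwd_L_r    (hc : a * c * a = a) (hx : IsMPInverse a x) :
    (c * a * star a * a + 1 - c * a) * (c * a * (x * star x) + 1 - c * a) = 1 := by
  obtain ⟨h1, h2, h3, h4⟩ := hx
  simp only [mul_add, mul_sub, add_mul, sub_mul, mul_one, one_mul, mul_assoc,
    t_aca hc, t_aca0 hc, t_axa h1, t_axa0 h1, t_xax h2, t_xax0 h2,
    t_ss1 h4, t_ss10 h4, t_ss2 h3, t_ss20 h3, t_sax h1 h3, t_sax0 h1 h3,
    t_sxa h2 h4, t_sxa0 h2 h4, t_axs h2 h3, t_axs0 h2 h3, t_xas h1 h4, t_xas0 h1 h4,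
    t_acs hc h2 h3, t_acs0 hc h2 h3, t_sca hc h2 h4, t_sca0 hc h2 h4]
  abel

lemma fwd_L_l    (hc : a * c * a = a) (hx : IsMPInverse a x) :
    (c * a * (x * star x) + 1 - c * a) * (c * a * star a * a + 1 - c * a) = 1 := by
  obtain ⟨h1, h2, h3, h4⟩ := hx
  simp only [mul_add, mul_sub, add_mul, sub_mul, mul_one, one_mul, mul_assoc,
    t_aca hc, t_aca0 hc, t_axa h1, t_axa0 h1, t_xax h2, t_xax0 h2,
    t_ss1 h4, t_ss10 h4, t_ss2 h3, t_ss20 h3, t_sax h1 h3, t_sax0 h1 h3,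
    t_sxa h2 h4, t_sxa0 h2 h4, t_axs h2 h3, t_axs0 h2 h3, t_xas h1 h4, t_xas0 h1 h4,
    t_acs hc h2 h3, t_acs0 hc h2 h3, t_sca hc h2 h4, t_sca0 hc h2 h4]
  abel

end Fwd2

section Conv
variable {R : Type*} [Ring R] [StarRing R]

lemma conv_iii (a c s : R) (hc : a * c * a = a)
    (hs : (star a * a + 1 - c * a) * s = 1) : ∃ x, IsMPInverse a x := by
  have key : a * (star a * (a * s)) = a := by
    have h0 : a * ((star a * a + 1 - c * a) * s) = a := by rw [hs, mul_one]
    calc a * (star a * (a * s)) = a * ((star a * a + 1 - c * a) * s) := by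
          simp only [mul_add, mul_sub, add_mul, sub_mul, mul_one, one_mul, mul_assoc,
            t_aca hc, t_aca0 hc]
          abel
      _ = a := h0
  exact lemA a (a * s) s key rfl

lemma conv_v (a c s : R) (hc : a * c * a = a)
    (hs : (c * a * star a * a + 1 - c * a) * s = 1) : ∃ x, IsMPInverse a x := by
  have key : a * (star a * (a * s)) = a := by
    have h0 : a * ((c * a * star a * a + 1 - c * a) * s) = a := by rw [hs, mul_one]
    calc a * (star a * (a * s)) = a * ((c * a * star a * a + 1 - c * a) * s) := by
          simp only [mul_add, mul_sub, add_mul, sub_mul, mul_one, one_mul, mul_assoc,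
            t_aca hc, t_aca0 hc]
          abel
      _ = a := h0
  exact lemA a (a * s) s key rfl

lemma conv_ii (a c s : R) (hc : a * c * a = a)
    (hs : (a * star a + 1 - a * c) * s = 1) : ∃ x, IsMPInverse a x := by
  have step1 : a * (star a * s) = a * c := by
    have h0 : a * (c * ((a * star a + 1 - a * c) * s)) = a * c := by rw [hs, mul_one]
    calc a * (star a * s) = a * (c * ((a * star a + 1 - a * c) * s)) := by
          simp only [mul_add, mul_sub, add_mul, sub_mul, mul_one, one_mul, mul_assoc,
            t_aca hc, t_aca0 hc]
          abel
      _ = a * c := h0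
  have h1 : a * (star a * (s * a)) = a := by
    calc a * (star a * (s * a)) = (a * (star a * s)) * a := by simp only [mul_assoc]
      _ = a * c * a := by rw [step1]
      _ = a := hc
  have w0 : (1 - a * c) * s = 1 - a * c := by
    have e : (a * star a + 1 - a * c) * s - a * star a * s = 1 - a * c := by
      rw [hs, mul_assoc, step1]
    calc (1 - a * c) * s = (a * star a + 1 - a * c) * s - a * star a * s := by
          simp only [add_mul, sub_mul, one_mul]; abel
      _ = 1 - a * c := e
  have w1 : (1 - a * c) * (s * a) = 0 := by
    rw [← mul_assoc, w0, sub_mul, one_mul, hc]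
    exact sub_self a
  have seq : s * a = a * (c * (s * a)) := by
    have w2 : s * a - a * (c * (s * a)) = 0 := by
      calc s * a - a * (c * (s * a)) = (1 - a * c) * (s * a) := by
            simp only [sub_mul, one_mul, mul_assoc]
        _ = 0 := w1
    exact sub_eq_zero.mp w2
  have h2' : star a * (s * a) = star a * (a * (c * (s * a))) := by
    conv_lhs => rw [seq]
  exact lemA a (s * a) (c * (s * a)) h1 h2'

lemma conv_iv (a c s : R) (hc : a * c * a = a)
    (hs : (a * star a * a * c + 1 - a * c) * s = 1) : ∃ x, IsMPInverse a x := by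
  have step1 : a * (star a * (a * (c * s))) = a * c := by
    have h0 : a * (c * ((a * star a * a * c + 1 - a * c) * s)) = a * c := by rw [hs, mul_one]
    calc a * (star a * (a * (c * s)))
        = a * (c * ((a * star a * a * c + 1 - a * c) * s)) := by
          simp only [mul_add, mul_sub, add_mul, sub_mul, mul_one, one_mul, mul_assoc,
            t_aca hc, t_aca0 hc]
          abel
      _ = a * c := h0
  have h1 : a * (star a * (a * (c * (s * a)))) = a := by
    calc a * (star a * (a * (c * (s * a)))) = (a * (star a * (a * (c * s)))) * a := by
          simp only [mul_assoc]
      _ = a * c * a := by rw [step1]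
      _ = a := hc
  exact lemA a (a * (c * (s * a))) (c * (s * a)) h1 rfl

lemma conv_vi (a c s : R) (hc : a * c * a = a)
    (hs : s * (a * star a + 1 - a * c) = 1) : ∃ x, IsMPInverse a x := by
  have hc' : star a * star c * star a = star a := by
    simpa [star_mul, mul_assoc] using congrArg star hc
  obtain ⟨y, hy⟩ := conv_iii (star a) (star c) (star s) hc'
    (by simpa [star_mul, star_add, star_sub, star_one, star_star, mul_assoc]
      using congrArg star hs)
  exact ⟨star y, by simpa [IsMPInverse, star_star] using mp_star hy⟩

lemma conv_vii (a c s : R) (hc : a * c * a = a)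
    (hs : s * (star a * a + 1 - c * a) = 1) : ∃ x, IsMPInverse a x := by
  have hc' : star a * star c * star a = star a := by
    simpa [star_mul, mul_assoc] using congrArg star hc
  obtain ⟨y, hy⟩ := conv_ii (star a) (star c) (star s) hc'
    (by simpa [star_mul, star_add, star_sub, star_one, star_star, mul_assoc]
      using congrArg star hs)
  exact ⟨star y, by simpa [IsMPInverse, star_star] using mp_star hy⟩

lemma conv_viii (a c s : R) (hc : a * c * a = a)
    (hs : s * (a * star a * a * c + 1 - a * c) = 1) : ∃ x, IsMPInverse a x := by
  have hc' : star a * star c * star a = star a := by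
    simpa [star_mul, mul_assoc] using congrArg star hc
  obtain ⟨y, hy⟩ := conv_v (star a) (star c) (star s) hc'
    (by simpa [star_mul, star_add, star_sub, star_one, star_star, mul_assoc]
      using congrArg star hs)
  exact ⟨star y, by simpa [IsMPInverse, star_star] using mp_star hy⟩

lemma conv_ix (a c s : R) (hc : a * c * a = a)
    (hs : s * (c * a * star a * a + 1 - c * a) = 1) : ∃ x, IsMPInverse a x := by
  have hc' : star a * star c * star a = star a := by
    simpa [star_mul, mul_assoc] using congrArg star hc
  obtain ⟨y, hy⟩ := conv_iv (star a) (star c) (star s) hc'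
    (by simpa [star_mul, star_add, star_sub, star_one, star_star, mul_assoc]
      using congrArg star hs)
  exact ⟨star y, by simpa [IsMPInverse, star_star] using mp_star hy⟩

end Conv
/-- Theorem 5.1: one-sided invertibility characterizations of the Moore-Penrose
invertibility of a regular element `a` with inner inverse `c`. -/
theorem stmt_12 {R : Type*} [Ring R] [StarRing R] (a c : R)
    (hc : a * c * a = a) :
    ((∃ x, IsMPInverse a x) ↔ ∃ s, (a * star a + 1 - a * c) * s = 1) ∧
    ((∃ x, IsMPInverse a x) ↔ ∃ s, (star a * a + 1 - c * a) * s = 1) ∧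
    ((∃ x, IsMPInverse a x) ↔ ∃ s, (a * star a * a * c + 1 - a * c) * s = 1) ∧
    ((∃ x, IsMPInverse a x) ↔ ∃ s, (c * a * star a * a + 1 - c * a) * s = 1) ∧
    ((∃ x, IsMPInverse a x) ↔ ∃ s, s * (a * star a + 1 - a * c) = 1) ∧
    ((∃ x, IsMPInverse a x) ↔ ∃ s, s * (star a * a + 1 - c * a) = 1) ∧
    ((∃ x, IsMPInverse a x) ↔ ∃ s, s * (a * star a * a * c + 1 - a * c) = 1) ∧
    ((∃ x, IsMPInverse a x) ↔ ∃ s, s * (c * a * star a * a + 1 - c * a) = 1) := by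
  refine ⟨⟨?_, ?_⟩, ⟨?_, ?_⟩, ⟨?_, ?_⟩, ⟨?_, ?_⟩, ⟨?_, ?_⟩, ⟨?_, ?_⟩, ⟨?_, ?_⟩, ⟨?_, ?_⟩⟩
  · rintro ⟨x, hx⟩; exact ⟨star x * c + 1 - a * x, fwd_M_r hc hx⟩
  · rintro ⟨s, hs⟩; exact conv_ii a c s hc hs
  · rintro ⟨x, hx⟩; exact ⟨c * a * (x * star x) + 1 - x * a, fwd_M'_r hc hx⟩
  · rintro ⟨s, hs⟩; exact conv_iii a c s hc hs
  · rintro ⟨x, hx⟩; exact ⟨star x * c + 1 - a * c, fwd_K_r hc hx⟩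
  · rintro ⟨s, hs⟩; exact conv_iv a c s hc hs
  · rintro ⟨x, hx⟩; exact ⟨c * a * (x * star x) + 1 - c * a, fwd_L_r hc hx⟩
  · rintro ⟨s, hs⟩; exact conv_v a c s hc hs
  · rintro ⟨x, hx⟩; exact ⟨star x * c + 1 - a * x, fwd_M_l hc hx⟩
  · rintro ⟨s, hs⟩; exact conv_vi a c s hc hs
  · rintro ⟨x, hx⟩; exact ⟨c * a * (x * star x) + 1 - x * a, fwd_M'_l hc hx⟩
  · rintro ⟨s, hs⟩; exact conv_vii a c s hc hs
  · rintro ⟨x, hx⟩; exact ⟨star x * c + 1 - a * c, fwd_K_l hc hx⟩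
  · rintro ⟨s, hs⟩; exact conv_viii a c s hc hs
  · rintro ⟨x, hx⟩; exact ⟨c * a * (x * star x) + 1 - c * a, fwd_L_l hc hx⟩
  · rintro ⟨s, hs⟩; exact conv_ix a c s hc hs
end

section
/- Let a be an element of a unital *-ring R with inner inverse a⁻. Then the following are equivalent: (i) a is Moore-Penrose invertible and a ∈ a²R (i.e., a = a² r for some r ∈ R); (ii) u = a a* a + 1 − a a⁻ is right invertible; (iii) v = a* a² + 1 − a⁻ a is right invertible. -/
section Aux

variable {R : Type*} [Ring R] [StarRing R]

set_option linter.unusedSectionVars false in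
/-- Jacobson-style transfer of right inverses: if `1 + pq` has a right
inverse `s`, then `1 + qp` has right inverse `1 - q s p`. -/
lemma jacobson_right (p q s : R) (h : (1 + p * q) * s = 1) :
    (1 + q * p) * (1 - q * (s * p)) = 1 := by
  have h' : q * ((1 + p * q) * s * p) = q * p := by rw [h, one_mul]
  calc (1 + q * p) * (1 - q * (s * p))
      = 1 + q * p - q * ((1 + p * q) * s * p) := by noncomm_ring
    _ = 1 + q * p - q * p := by rw [h']
    _ = 1 := by noncomm_ring

/-- If `a = a a* a t` then `t* a*` is a Moore-Penrose inverse of `a`. -/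
lemma mp_aux (a t : R) (hE : a = a * (star a * (a * t))) :
    IsMPInverse a (star t * star a) := by
  have hEr : a * (star a * (a * t)) = a := hE.symm
  have hE'r : star t * (star a * (a * star a)) = star a := by
    have h := congrArg star hEr
    simpa only [star_mul, star_star, mul_assoc] using h
  have G1r : star t * (star a * (a * (star a * a))) = star a * a := by
    calc star t * (star a * (a * (star a * a)))
        = (star t * (star a * (a * star a))) * a := by simp only [mul_assoc]
      _ = star a * a := by rw [hE'r]
  have G2r : star a * (a * (star a * (a * t))) = star a * a := by rw [hEr]
  have Sr : star t * (star a * a) = star a * (a * t) := by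
    calc star t * (star a * a)
        = star t * (star a * (a * (star a * (a * t)))) := by rw [G2r]
      _ = (star t * (star a * (a * (star a * a)))) * t := by simp only [mul_assoc]
      _ = (star a * a) * t := by rw [G1r]
      _ = star a * (a * t) := by simp only [mul_assoc]
  have P1 : a * (star t * (star a * a)) = a := by rw [Sr]; exact hEr
  have P1' : star a * (a * (t * star a)) = star a := by
    have h := congrArg star P1
    simpa only [star_mul, star_star, mul_assoc] using h
  have C3 : a * (t * star a) = a * (star t * star a) := by
    calc a * (t * star a)
        = (a * (star t * (star a * a))) * (t * star a) := by rw [P1]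
      _ = a * (star t * (star a * (a * (t * star a)))) := by simp only [mul_assoc]
      _ = a * (star t * star a) := by rw [P1']
  unfold IsMPInverse
  refine ⟨?_, ?_, ?_, ?_⟩
  · calc a * (star t * star a) * a
        = a * (star t * (star a * a)) := by simp only [mul_assoc]
      _ = a := P1
  · calc star t * star a * a * (star t * star a)
        = star t * (star a * (a * (star t * star a))) := by simp only [mul_assoc]
      _ = star t * (star a * (a * (t * star a))) := by rw [← C3]
      _ = star t * star a := by rw [P1']
  · calc star (a * (star t * star a))
        = a * (t * star a) := by simp only [star_mul, star_star, mul_assoc]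
      _ = a * (star t * star a) := C3
  · calc star (star t * star a * a)
        = star a * (a * t) := by simp only [star_mul, star_star, mul_assoc]
      _ = star t * (star a * a) := Sr.symm
      _ = star t * star a * a := by simp only [mul_assoc]

/-- (i) ⇒ (ii): explicit right inverse of `a a* a + 1 - a c`. -/
lemma li_to_ii (a c x r : R) (hc : a * c * a = a) (hx : IsMPInverse a x)
    (hr : a = a ^ 2 * r) :
    ∃ s, (a * star a * a + 1 - a * c) * s = 1 := by
  obtain ⟨h1, h2, h3, h4⟩ := hx
  have hcw : ∀ w : R, a * (c * (a * w)) = a * w := by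
    intro w
    calc a * (c * (a * w)) = a * c * a * w := by simp only [mul_assoc]
      _ = a * w := by rw [hc]
  have hrw : ∀ w : R, a * (a * (r * w)) = a * w := by
    intro w
    calc a * (a * (r * w)) = a ^ 2 * r * w := by simp only [pow_two, mul_assoc]
      _ = a * w := by rw [← hr]
  have hr' : a * (a * r) = a := by
    calc a * (a * r) = a ^ 2 * r := by simp only [pow_two, mul_assoc]
      _ = a := hr.symm
  have hAXA : star a * (star x * star a) = star a := by
    calc star a * (star x * star a)
        = star (a * x * a) := by simp only [star_mul, mul_assoc]
      _ = star a := by rw [h1]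
  have d2 : a * x = star x * star a := h3.symm.trans (star_mul a x)
  have d1 : x * a = star a * star x := h4.symm.trans (star_mul x a)
  have hI2 : star a * (a * x) = star a := by
    calc star a * (a * x) = star a * (star x * star a) := by rw [d2]
      _ = star a := hAXA
  have hI2w : ∀ w : R, star a * (a * (x * w)) = star a * w := by
    intro w
    calc star a * (a * (x * w))
        = (star a * (a * x)) * w := by simp only [mul_assoc]
      _ = star a * w := by rw [hI2]
  have hAXw : ∀ w : R, star a * (star x * w) = x * (a * w) := by
    intro w
    calc star a * (star x * w) = (x * a) * w := by rw [d1]; simp only [mul_assoc]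
      _ = x * (a * w) := by simp only [mul_assoc]
  have hxaw : ∀ w : R, a * (x * (a * w)) = a * w := by
    intro w
    calc a * (x * (a * w)) = a * x * a * w := by simp only [mul_assoc]
      _ = a * w := by rw [h1]
  have eaw : ∀ w : R, (a * star a * a + 1 - a * c) * (a * w)
      = a * (star a * (a * (a * w))) := by
    intro w
    have expand : (a * star a * a + 1 - a * c) * (a * w)
        = a * (star a * (a * (a * w))) + (a * w - a * (c * (a * w))) := by
      noncomm_ring
    rw [expand, hcw w, sub_self, add_zero]
  have e2 : (a * star a * a + 1 - a * c) * (a * c)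
      = a * (star a * (a * (a * c))) := eaw c
  have e3 : (a * star a * a + 1 - a * c) * (a * (r * (x * (star x * c)))) = a * c := by
    calc (a * star a * a + 1 - a * c) * (a * (r * (x * (star x * c))))
        = a * (star a * (a * (a * (r * (x * (star x * c)))))) := eaw _
      _ = a * (star a * (a * (x * (star x * c)))) := by rw [hrw]
      _ = a * (star a * (star x * c)) := by rw [hI2w]
      _ = a * (x * (a * c)) := by rw [hAXw]
      _ = a * c := by rw [hxaw]
  have e4 : (a * star a * a + 1 - a * c) * (a * r) = a * (star a * a) := by
    calc (a * star a * a + 1 - a * c) * (a * r)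
        = a * (star a * (a * (a * r))) := eaw r
      _ = a * (star a * a) := by rw [hr']
  have e5 : (a * star a * a + 1 - a * c) * (a * (r * (a * c)))
      = a * (star a * (a * (a * c))) := by
    calc (a * star a * a + 1 - a * c) * (a * (r * (a * c)))
        = a * (star a * (a * (a * (r * (a * c))))) := eaw _
      _ = a * (star a * (a * (a * c))) := by rw [hrw]
  refine ⟨1 - a * c + a * (r * (x * (star x * c))) - a * r + a * (r * (a * c)), ?_⟩
  calc (a * star a * a + 1 - a * c)
        * (1 - a * c + a * (r * (x * (star x * c))) - a * r + a * (r * (a * c)))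
      = (a * star a * a + 1 - a * c) * 1
        - (a * star a * a + 1 - a * c) * (a * c)
        + (a * star a * a + 1 - a * c) * (a * (r * (x * (star x * c))))
        - (a * star a * a + 1 - a * c) * (a * r)
        + (a * star a * a + 1 - a * c) * (a * (r * (a * c))) := by noncomm_ring
    _ = (a * star a * a + 1 - a * c) * 1
        - a * (star a * (a * (a * c)))
        + a * c
        - a * (star a * a)
        + a * (star a * (a * (a * c))) := by rw [e2, e3, e4, e5]
    _ = 1 := by noncomm_ring

/-- (iii) ⇒ (i). -/
lemma liii_to_i (a c s : R) (hc : a * c * a = a)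
    (hv : (star a * a ^ 2 + 1 - c * a) * s = 1) :
    (∃ x, IsMPInverse a x) ∧ ∃ r, a = a ^ 2 * r := by
  have hE : a = a * (star a * (a * (a * s))) := by
    calc a = a * ((star a * a ^ 2 + 1 - c * a) * s) := by rw [hv, mul_one]
      _ = (a * (star a * (a * a)) + (a - a * c * a)) * s := by noncomm_ring
      _ = (a * (star a * (a * a)) + (a - a)) * s := by rw [hc]
      _ = a * (star a * (a * (a * s))) := by noncomm_ring
  have hx := mp_aux a (a * s) hE
  set x := star (a * s) * star a with hxdef
  refine ⟨⟨x, hx⟩, ⟨s * (star a * a), ?_⟩⟩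
  obtain ⟨h1, h2, h3, h4⟩ := hx
  have hXA : star x * star a = a * x := (star_mul a x).symm.trans h3
  have hAX : star a * star x = x * a := (star_mul x a).symm.trans h4
  have hAXA : star a * (star x * star a) = star a := by
    calc star a * (star x * star a)
        = star (a * x * a) := by simp only [star_mul, mul_assoc]
      _ = star a := by rw [h1]
  have hAXAw : ∀ w : R, star a * (star x * (star a * w)) = star a * w := by
    intro w
    calc star a * (star x * (star a * w))
        = (star a * (star x * star a)) * w := by simp only [mul_assoc]
      _ = star a * w := by rw [hAXA]
  have hα : ∀ w : R, x * (a * (star a * w)) = star a * w := by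
    intro w
    calc x * (a * (star a * w))
        = (x * a) * (star a * w) := by simp only [mul_assoc]
      _ = (star a * star x) * (star a * w) := by rw [hAX]
      _ = star a * (star x * (star a * w)) := by simp only [mul_assoc]
      _ = star a * w := hAXAw w
  have hβ : x * a = star a * (a * (a * s)) := by
    calc x * a = x * (a * (star a * (a * (a * s)))) := by rw [← hE]
      _ = star a * (a * (a * s)) := hα _
  have hX : star x = a * (a * s) := by
    calc star x = star (x * a * x) := by rw [h2]
      _ = star x * (star a * star x) := by simp only [star_mul, mul_assoc]
      _ = star x * (x * a) := by rw [hAX]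
      _ = star x * (star a * (a * (a * s))) := by rw [hβ]
      _ = (star x * star a) * (a * (a * s)) := by simp only [mul_assoc]
      _ = (a * x) * (a * (a * s)) := by rw [hXA]
      _ = (a * x * a) * (a * s) := by simp only [mul_assoc]
      _ = a * (a * s) := by rw [h1]
  have hXAa : star x * (star a * a) = a := by
    calc star x * (star a * a)
        = (star x * star a) * a := by simp only [mul_assoc]
      _ = a * x * a := by rw [hXA]
      _ = a := h1
  calc a = star x * (star a * a) := hXAa.symm
    _ = (a * (a * s)) * (star a * a) := by rw [hX]
    _ = a ^ 2 * (s * (star a * a)) := by simp only [pow_two, mul_assoc]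

end Aux

/-- Theorem 5.3: for a regular element `a` with inner inverse `c`, `a` is
Moore-Penrose invertible with `a ∈ a²R` iff `a a* a + 1 - a c` is right
invertible iff `a* a² + 1 - c a` is right invertible. -/
theorem stmt_14 {R : Type*} [Ring R] [StarRing R] (a c : R)
    (hc : a * c * a = a) :
    (((∃ x, IsMPInverse a x) ∧ ∃ r, a = a ^ 2 * r) ↔
      ∃ s, (a * star a * a + 1 - a * c) * s = 1) ∧
    (((∃ x, IsMPInverse a x) ∧ ∃ r, a = a ^ 2 * r) ↔
      ∃ s, (star a * a ^ 2 + 1 - c * a) * s = 1) := by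
  have fwd1 : ((∃ x, IsMPInverse a x) ∧ ∃ r, a = a ^ 2 * r) →
      ∃ s, (a * star a * a + 1 - a * c) * s = 1 := by
    rintro ⟨⟨x, hx⟩, r, hr⟩
    exact li_to_ii a c x r hc hx hr
  have ii_to_iii : (∃ s, (a * star a * a + 1 - a * c) * s = 1) →
      ∃ s, (star a * a ^ 2 + 1 - c * a) * s = 1 := by
    rintro ⟨s, hs⟩
    refine ⟨1 - (star a * a - c) * (s * a), ?_⟩
    have hu' : (1 + a * (star a * a - c)) * s = 1 := by
      calc (1 + a * (star a * a - c)) * s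
          = (a * star a * a + 1 - a * c) * s := by noncomm_ring
        _ = 1 := hs
    calc (star a * a ^ 2 + 1 - c * a) * (1 - (star a * a - c) * (s * a))
        = (1 + (star a * a - c) * a) * (1 - (star a * a - c) * (s * a)) := by
          noncomm_ring
      _ = 1 := jacobson_right a (star a * a - c) s hu'
  have iii_to_ii : (∃ s, (star a * a ^ 2 + 1 - c * a) * s = 1) →
      ∃ s, (a * star a * a + 1 - a * c) * s = 1 := by
    rintro ⟨s, hs⟩
    refine ⟨1 - a * (s * (star a * a - c)), ?_⟩
    have hv' : (1 + (star a * a - c) * a) * s = 1 := by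
      calc (1 + (star a * a - c) * a) * s
          = (star a * a ^ 2 + 1 - c * a) * s := by noncomm_ring
        _ = 1 := hs
    calc (a * star a * a + 1 - a * c) * (1 - a * (s * (star a * a - c)))
        = (1 + a * (star a * a - c)) * (1 - a * (s * (star a * a - c))) := by
          noncomm_ring
      _ = 1 := jacobson_right (star a * a - c) a s hv'
  constructor
  · constructor
    · exact fwd1
    · intro h
      obtain ⟨s', hs'⟩ := ii_to_iii h
      exact liii_to_i a c s' hc hs'
  · constructor
    · intro h
      exact ii_to_iii (fwd1 h)
    · rintro ⟨s, hs⟩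
      exact liii_to_i a c s hc hs
end

section
/- Let a be an element of a unital *-ring R with inner inverse a⁻. Then the following are equivalent: (i) a is Moore-Penrose invertible and a ∈ Ra² (i.e., a = r a² for some r ∈ R); (ii) u = a a* a + 1 − a⁻ a is left invertible; (iii) v = a² a* + 1 − a a⁻ is left invertible. -/
section Aux

variable {R : Type*} [Ring R] [StarRing R]

private lemma jac {R : Type*} [Ring R] (a p s : R) (h : s * (1 + p * a) = 1) :
    (1 - a * s * p) * (1 + a * p) = 1 := by
  have e : (1 - a * s * p) * (1 + a * p)
      = 1 + a * p - a * (s * (1 + p * a)) * p := by noncomm_ring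
  rw [e, h]; noncomm_ring

/-- From `m a a* a = a` build an explicit Moore–Penrose inverse `a* m*`,
together with the identity `a a* m a = a`. -/
private lemma mp_of (a m : R) (H : m * a * star a * a = a) :
    IsMPInverse a (star a * star m) ∧ a * star a * m * a = a := by
  have H0c : m * (a * (star a * a)) = a := by simpa [mul_assoc] using H
  have H0 : ∀ z : R, m * (a * (star a * (a * z))) = a * z := by
    intro z
    calc m * (a * (star a * (a * z))) = (m * (a * (star a * a))) * z := by
          simp only [mul_assoc]
      _ = a * z := by rw [H0c]
  have L1c : star a * (a * (star a * star m)) = star a := by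
    have := congrArg star H0c
    simpa [star_mul, mul_assoc] using this
  have L2c : m * (a * star a) = a * (star a * star m) := by
    calc m * (a * star a)
        = m * (a * (star a * (a * (star a * star m)))) := by rw [L1c]
      _ = a * (star a * star m) := by rw [H0]
  have L2 : ∀ z : R, m * (a * (star a * z)) = a * (star a * (star m * z)) := by
    intro z
    calc m * (a * (star a * z)) = (m * (a * star a)) * z := by simp only [mul_assoc]
      _ = (a * (star a * star m)) * z := by rw [L2c]
      _ = a * (star a * (star m * z)) := by simp only [mul_assoc]
  have L3c : a * (star a * (star m * a)) = a := by
    rw [← L2, H0c]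
  have h5c : star a * (m * (a * star a)) = star a := by
    have := congrArg star L3c
    simpa [star_mul, mul_assoc] using this
  have h5 : ∀ z : R, star a * (m * (a * (star a * z))) = star a * z := by
    intro z
    calc star a * (m * (a * (star a * z)))
        = (star a * (m * (a * star a))) * z := by simp only [mul_assoc]
      _ = star a * z := by rw [h5c]
  have L2'c : star a * (m * a) = star a * (star m * a) := by
    calc star a * (m * a)
        = star a * (m * (a * (star a * (star m * a)))) := by rw [L3c]
      _ = star a * (star m * a) := by rw [h5]
  have h7c : a * (star a * (m * a)) = a := by
    rw [L2'c]; exact L3c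
  have Kc : star a * (star m * (a * star a)) = star a := by
    have := congrArg star h7c
    simpa [star_mul, mul_assoc] using this
  have K : ∀ z : R, star a * (star m * (a * (star a * z))) = star a * z := by
    intro z
    calc star a * (star m * (a * (star a * z)))
        = (star a * (star m * (a * star a))) * z := by simp only [mul_assoc]
      _ = star a * z := by rw [Kc]
  constructor
  · refine ⟨?_, ?_, ?_, ?_⟩
    · -- a * x * a = a
      calc a * (star a * star m) * a = a * (star a * (star m * a)) := by
            simp only [mul_assoc]
        _ = a := L3c
    · -- x * a * x = x
      calc (star a * star m) * a * (star a * star m)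
          = star a * (star m * (a * (star a * star m))) := by simp only [mul_assoc]
        _ = star a * star m := by rw [K]
    · -- star (a x) = a x
      calc star (a * (star a * star m)) = m * (a * star a) := by
            simp [star_mul, mul_assoc]
        _ = a * (star a * star m) := L2c
    · -- star (x a) = x a
      calc star ((star a * star m) * a) = star a * (m * a) := by
            simp [star_mul, mul_assoc]
        _ = star a * (star m * a) := L2'c
        _ = (star a * star m) * a := by simp only [mul_assoc]
  · calc a * star a * m * a = a * (star a * (m * a)) := by simp only [mul_assoc]
      _ = a := h7c

/-- (iii) ⇒ (i) -/
private lemma key (a c s : R) (hc : a * c * a = a)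
    (h : s * (a ^ 2 * star a + 1 - a * c) = 1) :
    (∃ x, IsMPInverse a x) ∧ ∃ r, a = r * a ^ 2 := by
  have hva : (a ^ 2 * star a + 1 - a * c) * a = a * (a * (star a * a)) := by
    have e : (a ^ 2 * star a + 1 - a * c) * a
        = a * (a * (star a * a)) + a - a * c * a := by noncomm_ring
    rw [e, hc]; noncomm_ring
  have H : (s * a) * a * star a * a = a := by
    have e1 : s * ((a ^ 2 * star a + 1 - a * c) * a) = s * (a * (a * (star a * a))) :=
      congrArg _ hva
    have e2 : s * ((a ^ 2 * star a + 1 - a * c) * a) = a := by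
      rw [← mul_assoc, h, one_mul]
    have e3 : s * (a * (a * (star a * a))) = a := by rw [← e1, e2]
    calc (s * a) * a * star a * a = s * (a * (a * (star a * a))) := by
          simp only [mul_assoc]
      _ = a := e3
  obtain ⟨hmp, h7⟩ := mp_of a (s * a) H
  refine ⟨⟨_, hmp⟩, ⟨a * star a * s, ?_⟩⟩
  have : a * star a * s * a ^ 2 = a * star a * (s * a) * a := by
    rw [pow_two]; simp only [mul_assoc]
  rw [this, h7]

/-- (i) ⇒ (ii) -/
private lemma fwd (a c x r : R) (hc : a * c * a = a) (hx : IsMPInverse a x)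
    (hr : a = r * a ^ 2) :
    (1 + (c - a * star a) * (star x * (x * r)) * a) *
      (a * star a * a + 1 - c * a) = 1 := by
  obtain ⟨h1, h2, h3, h4⟩ := hx
  have hr' : r * (a * a) = a := by rw [pow_two] at hr; rw [← hr]
  have idA : x * a * star a = star a := by
    have e : star (x * a * star a) = a := by
      calc star (x * a * star a) = a * star (x * a) := by
            rw [star_mul, star_star]
        _ = a * (x * a) := by rw [h4]
        _ = a := by rw [← mul_assoc, h1]
    have := congrArg star e
    rwa [star_star] at this
  have idC : star x * (star a * a) = a := by
    calc star x * (star a * a) = (star x * star a) * a := by rw [mul_assoc]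
      _ = star (a * x) * a := by rw [star_mul]
      _ = (a * x) * a := by rw [h3]
      _ = a := h1
  have key1 : star x * (x * (a * (star a * a))) = a := by
    calc star x * (x * (a * (star a * a)))
        = star x * ((x * a * star a) * a) := by simp only [mul_assoc]
      _ = star x * (star a * a) := by rw [idA]
      _ = a := idC
  have hau : a * (a * star a * a + 1 - c * a) = a * (a * (star a * a)) := by
    have e : a * (a * star a * a + 1 - c * a)
        = a * (a * (star a * a)) + a - a * c * a := by noncomm_ring
    rw [e, hc]; noncomm_ring
  have hk : (c - a * star a) * (star x * (x * r)) * (a * (a * star a * a + 1 - c * a))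
      = c * a - a * star a * a := by
    rw [hau]
    have e : (c - a * star a) * (star x * (x * r)) * (a * (a * (star a * a)))
        = (c - a * star a) * (star x * (x * ((r * (a * a)) * (star a * a)))) := by
      simp only [mul_assoc]
    rw [e, hr']
    have e2 : (c - a * star a) * (star x * (x * (a * (star a * a))))
        = (c - a * star a) * (star x * (x * (a * (star a * a)))) := rfl
    rw [show star x * (x * (a * (star a * a))) = a from key1]
    noncomm_ring
  have expand : (1 + (c - a * star a) * (star x * (x * r)) * a) *
      (a * star a * a + 1 - c * a)
      = (a * star a * a + 1 - c * a) +
        (c - a * star a) * (star x * (x * r)) * (a * (a * star a * a + 1 - c * a)) := by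
    noncomm_ring
  rw [expand, hk]; noncomm_ring

end Aux

/-- Theorem 5.5: for a regular element `a` with inner inverse `c`, `a` is
Moore-Penrose invertible with `a ∈ Ra²` iff `a a* a + 1 - c a` is left
invertible iff `a² a* + 1 - a c` is left invertible. -/
theorem stmt_15 {R : Type*} [Ring R] [StarRing R] (a c : R)
    (hc : a * c * a = a) :
    (((∃ x, IsMPInverse a x) ∧ ∃ r, a = r * a ^ 2) ↔
      ∃ s, s * (a * star a * a + 1 - c * a) = 1) ∧
    (((∃ x, IsMPInverse a x) ∧ ∃ r, a = r * a ^ 2) ↔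
      ∃ s, s * (a ^ 2 * star a + 1 - a * c) = 1) := by
  set p : R := a * star a - c with hp
  have hu : a * star a * a + 1 - c * a = 1 + p * a := by rw [hp]; noncomm_ring
  have hv : a ^ 2 * star a + 1 - a * c = 1 + a * p := by rw [hp]; noncomm_ring
  have i_to_ii : ((∃ x, IsMPInverse a x) ∧ ∃ r, a = r * a ^ 2) →
      ∃ s, s * (a * star a * a + 1 - c * a) = 1 := by
    rintro ⟨⟨x, hx⟩, r, hr⟩
    exact ⟨_, fwd a c x r hc hx hr⟩
  have ii_to_iii : (∃ s, s * (a * star a * a + 1 - c * a) = 1) →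
      ∃ s, s * (a ^ 2 * star a + 1 - a * c) = 1 := by
    rintro ⟨s, hs⟩
    rw [hu] at hs
    exact ⟨1 - a * s * p, by rw [hv]; exact jac a p s hs⟩
  have iii_to_i : (∃ s, s * (a ^ 2 * star a + 1 - a * c) = 1) →
      (∃ x, IsMPInverse a x) ∧ ∃ r, a = r * a ^ 2 := by
    rintro ⟨s, hs⟩
    exact key a c s hc hs
  constructor
  · exact ⟨i_to_ii, fun h => iii_to_i (ii_to_iii h)⟩
  · exact ⟨fun h => ii_to_iii (i_to_ii h), iii_to_i⟩
end
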